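/- There exists an absolute constant C such that for every real y ≥ 2, every real β ≥ 3/4, every real α, every real δ ≥ 1, and all t, t' ∈ ℝ with |t − t'| ≤ 1/(δ · log y), one has 𝔼 | F_y(β/2 + it) / F_y(β/2 + it') |^{2α} ≤ exp(C·(1 + |α|^{11/3})) · ζ(β,y)^{α²/δ²}. -/

import Mathlib

open MeasureTheory ProbabilityTheory Finset

noncomputable section
set_option maxHeartbeats 2000000
open scoped ENNReal NNReal


/-- The largest prime factor of `n`, with value `1` when `n` has no prime factors. -/
def largestPrimeFactor (n : ℕ) : ℕ := WithBot.unbotD 1 n.primeFactors.max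

/-- The finset of primes `p ≤ y`. -/
def primesUpTo (y : ℝ) : Finset ℕ :=
  (Finset.range (⌊y⌋₊ + 1)).filter (fun p => p.Prime ∧ (p : ℝ) ≤ y)

/-- `Ψ(x,y)`: the number of `y`-smooth integers `1 ≤ n ≤ x`. -/
def Psi (x y : ℝ) : ℕ :=
  Nat.card {n : ℕ | 1 ≤ n ∧ (n : ℝ) ≤ x ∧ (largestPrimeFactor n : ℝ) ≤ y}

/-- The finset of `y`-smooth integers `1 ≤ n ≤ x`. -/
def smoothFinset (x y : ℝ) : Finset ℕ :=
  (Finset.Icc 1 ⌊x⌋₊).filter (fun n => (largestPrimeFactor n : ℝ) ≤ y)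

/-- The uniform probability measure on the unit circle `{z : ℂ | |z| = 1}`,
realized as the pushforward of Lebesgue measure on `(0,1]` under `t ↦ e^{2πit}`. -/
def uniformCircle : Measure ℂ :=
  Measure.map (fun t : ℝ => Complex.exp (2 * Real.pi * t * Complex.I))
    ((volume : Measure ℝ).restrict (Set.Ioc 0 1))

/-- `f` is a Steinhaus random multiplicative function on the probability space `(Ω, μ)`:
the values `f p` at the primes are independent random variables, each uniformly
distributed on the complex unit circle, and `f` is extended to all `n ≥ 1` by
complete multiplicativity `f n = ∏_p (f p) ^ (v_p n)`. -/
structure IsSteinhaus {Ω : Type*} [MeasurableSpace Ω] (μ : Measure Ω) (f : ℕ → Ω → ℂ) :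
    Prop where
  isProb : IsProbabilityMeasure μ
  meas : ∀ n, Measurable (f n)
  uniform : ∀ p : ℕ, p.Prime → μ.map (f p) = uniformCircle
  indep : iIndepFun (m := fun _ : {p : ℕ // p.Prime} => (inferInstance : MeasurableSpace ℂ))
    (fun p ω => f p.1 ω) μ
  mult : ∀ ω, ∀ n : ℕ, 1 ≤ n → f n ω = ∏ p ∈ n.primeFactors, f p ω ^ n.factorization p

/-- `α` is the saddle point `α(x,y)`: the (unique) positive solution of
`∑_{p ≤ y} log p / (p^α - 1) = log x`. -/
def IsSaddle (x y α : ℝ) : Prop :=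
  0 < α ∧ ∑ p ∈ primesUpTo y, Real.log p / ((p : ℝ) ^ α - 1) = Real.log x

/-- The random truncated Euler product `F_y(s) = ∏_{p ≤ y} (1 - f(p) p^{-s})⁻¹`. -/
def eulerF {Ω : Type*} (f : ℕ → Ω → ℂ) (y : ℝ) (s : ℂ) (ω : Ω) : ℂ :=
  ∏ p ∈ primesUpTo y, (1 - f p ω * (p : ℂ) ^ (-s))⁻¹

/-- The truncated Euler product `ζ(σ,y) = ∏_{p ≤ y} (1 - p^{-σ})⁻¹`. -/
def zetaSmooth (σ y : ℝ) : ℝ :=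
  ∏ p ∈ primesUpTo y, (1 - (p : ℝ) ^ (-σ))⁻¹


namespace St15Aux

def circ (t : ℝ) : ℂ := Complex.exp (2 * Real.pi * t * Complex.I)


lemma circ_ne_zero (t : ℝ) : circ t ≠ 0 := Complex.exp_ne_zero _

lemma norm_circ (t : ℝ) : ‖circ t‖ = 1 := by
  rw [circ, Complex.norm_exp]
  have : (2 * (Real.pi:ℂ) * (t:ℂ) * Complex.I).re = 0 := by simp
  rw [this, Real.exp_zero]

lemma continuous_circ : Continuous circ := by
  unfold circ; fun_prop

lemma measurable_circ : Measurable circ := continuous_circ.measurable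

lemma nu_univ : (volume.restrict (Set.Ioc (0:ℝ) 1)) Set.univ = 1 := by
  rw [Measure.restrict_apply_univ, Real.volume_Ioc]; norm_num

instance : IsProbabilityMeasure ((volume : Measure ℝ).restrict (Set.Ioc (0:ℝ) 1)) := ⟨nu_univ⟩

lemma integral_circ_zpow (m : ℤ) :
    ∫ t in Set.Ioc (0:ℝ) 1, circ t ^ m = if m = 0 then 1 else 0 := by
  split_ifs with h
  · subst h
    simp only [zpow_zero]
    rw [integral_const]; simp [Measure.real, nu_univ]
  · have hc : (2 * (Real.pi:ℂ) * Complex.I * m) ≠ 0 := by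
      simp [Real.pi_ne_zero, Complex.I_ne_zero, h]
    have hfun : ∀ t : ℝ, circ t ^ m
        = Complex.exp ((2 * (Real.pi:ℂ) * Complex.I * m) * t) := by
      intro t
      rw [circ, ← Complex.exp_int_mul]
      ring_nf
    simp_rw [hfun]
    rw [← intervalIntegral.integral_of_le (zero_le_one)]
    rw [integral_exp_mul_complex hc]
    have h1 : ((2 * (Real.pi:ℂ) * Complex.I * m) * (1:ℝ)) = (m:ℂ) * (2 * Real.pi * Complex.I) := by
      push_cast; ring
    have h0 : ((2 * (Real.pi:ℂ) * Complex.I * m) * (0:ℝ)) = 0 := by push_cast; ring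
    rw [h1, h0, Complex.exp_int_mul_two_pi_mul_I, Complex.exp_zero, sub_self, zero_div]

lemma integral_circ_pow (k : ℕ) :
    ∫ t in Set.Ioc (0:ℝ) 1, circ t ^ k = if k = 0 then 1 else 0 := by
  have := integral_circ_zpow (k : ℤ)
  simp only [zpow_natCast] at this
  rw [this]
  simp

lemma conj_circ (t : ℝ) : (starRingEnd ℂ) (circ t) = (circ t)⁻¹ := by
  rw [circ, ← Complex.exp_conj, ← Complex.exp_neg]
  congr 1
  apply Complex.ext <;> simp

lemma integral_circ_pow_mul_conj (k j : ℕ) :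
    ∫ t in Set.Ioc (0:ℝ) 1, circ t ^ k * (starRingEnd ℂ) (circ t ^ j)
      = if k = j then 1 else 0 := by
  have hfun : ∀ t : ℝ, circ t ^ k * (starRingEnd ℂ) (circ t ^ j) = circ t ^ ((k:ℤ) - j) := by
    intro t
    rw [map_pow, conj_circ, ← zpow_natCast (circ t), ← zpow_natCast (circ t)⁻¹, inv_zpow,
      ← zpow_neg, ← zpow_add₀ (circ_ne_zero t), sub_eq_add_neg]
  simp_rw [hfun]
  rw [integral_circ_zpow]
  simp [sub_eq_zero]



lemma exp_one_sub_le (u : ℝ) : Real.exp u * (1 - u) ≤ 1 := by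
  calc Real.exp u * (1 - u) ≤ Real.exp u * Real.exp (-u) := by
        apply mul_le_mul_of_nonneg_left (by linarith [Real.add_one_le_exp (-u)])
          (Real.exp_pos u).le
    _ = 1 := by rw [← Real.exp_add]; simp

lemma exp_le_one_add_three_mul {x : ℝ} (h0 : 0 ≤ x) (h1 : x ≤ 1) :
    Real.exp x ≤ 1 + 3 * x := by
  have h2 := exp_one_sub_le x
  have h3 : Real.exp x ≤ Real.exp 1 := Real.exp_le_exp.mpr h1
  have h4 : Real.exp 1 ≤ 3 := by have := Real.exp_one_lt_d9; linarith
  nlinarith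

lemma exp_quad (u : ℝ) : Real.exp u ≤ 1 + u + u ^ 2 / 2 * Real.exp |u| := by
  rcases le_or_gt 0 u with hu | hu
  · rw [abs_of_nonneg hu]
    have hg : ∀ v : ℝ, HasDerivAt (fun w => 1 + w + w ^ 2 * Real.exp w / 2 - Real.exp w)
        (1 + (2 * v * Real.exp v + v ^ 2 * Real.exp v) / 2 - Real.exp v) v := by
      intro v
      have h1 : HasDerivAt (fun w : ℝ => w ^ 2) (2 * v) v := by
        simpa using hasDerivAt_pow 2 v
      have h2 := Real.hasDerivAt_exp v
      have h3 := h1.mul h2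
      have h4 := (hasDerivAt_id v).const_add (1:ℝ)
      have h5 := (h4.add (h3.div_const 2)).sub h2
      exact h5
    have hmono : Monotone (fun w => 1 + w + w ^ 2 * Real.exp w / 2 - Real.exp w) := by
      apply monotone_of_deriv_nonneg
      · intro v; exact (hg v).differentiableAt
      · intro v
        rw [(hg v).deriv]
        have := exp_one_sub_le v
        nlinarith [Real.exp_pos v, sq_nonneg v]
    have h0 := hmono hu
    simp only [ne_eq, OfNat.ofNat_ne_zero, not_false_eq_true, zero_pow, Real.exp_zero] at h0
    norm_num at h0
    nlinarith
  · have key : ∀ v : ℝ, v ≤ 0 → Real.exp v ≤ 1 + v + v ^ 2 / 2 := by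
      intro v hv
      have hanti : Antitone (fun w : ℝ => 1 + w + w ^ 2 / 2 - Real.exp w) := by
        apply antitone_of_deriv_nonpos
        · intro x
          apply DifferentiableAt.sub _ (Real.differentiable_exp _)
          fun_prop
        · intro x
          have hg : HasDerivAt (fun w : ℝ => 1 + w + w ^ 2 / 2 - Real.exp w)
              (1 + 2 * x / 2 - Real.exp x) x := by
            have h1 : HasDerivAt (fun w : ℝ => w ^ 2) (2 * x) x := by
              simpa using hasDerivAt_pow 2 x
            have h4 := (hasDerivAt_id x).const_add (1:ℝ)
            have h5 := (h4.add (h1.div_const 2)).sub (Real.hasDerivAt_exp x)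
            exact h5
          rw [hg.deriv]
          have := Real.add_one_le_exp x
          linarith
      have h0 := hanti hv
      simp only [Real.exp_zero] at h0
      norm_num at h0
      linarith
    have h1 := key u hu.le
    have h2 : (1:ℝ) ≤ Real.exp |u| := Real.one_le_exp (abs_nonneg u)
    nlinarith [sq_nonneg u]

lemma log_ratio_abs {A A' d c : ℝ} (hc : 0 < c) (hA : c ≤ A) (hA' : c ≤ A')
    (hd : |A' - A| ≤ d) : |Real.log A' - Real.log A| ≤ d / c := by
  have hA0 : 0 < A := lt_of_lt_of_le hc hA
  have hA'0 : 0 < A' := lt_of_lt_of_le hc hA'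
  have habs := abs_le.mp hd
  rw [abs_le]
  constructor
  · have h1 : Real.log A - Real.log A' = Real.log (A / A') := (Real.log_div hA0.ne' hA'0.ne').symm
    have h2 : Real.log (A / A') ≤ A / A' - 1 := Real.log_le_sub_one_of_pos (by positivity)
    have h3 : A / A' - 1 = (A - A') / A' := by field_simp
    have h4 : (A - A') / A' ≤ d / c := by
      apply div_le_div₀ (by linarith) (by linarith) hc hA'
    have : Real.log A - Real.log A' ≤ d / c := by rw [h1]; linarith [h2.trans (h3 ▸ h4)]
    linarith
  · have h1 : Real.log A' - Real.log A = Real.log (A' / A) := (Real.log_div hA'0.ne' hA0.ne').symm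
    have h2 : Real.log (A' / A) ≤ A' / A - 1 := Real.log_le_sub_one_of_pos (by positivity)
    have h3 : A' / A - 1 = (A' - A) / A := by field_simp
    have h4 : (A' - A) / A ≤ d / c := by
      apply div_le_div₀ (by linarith) (by linarith) hc hA
    rw [h1]; linarith [h2.trans (h3 ▸ h4)]

lemma one_sub_cos_le (x : ℝ) : 1 - Real.cos x ≤ x ^ 2 / 2 := by
  have h1 := Real.abs_sin_half x
  have h2 : |Real.sin (x/2)| ≤ |x/2| := Real.abs_sin_le_abs
  have h3 : (0:ℝ) ≤ (1 - Real.cos x)/2 := by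
    have := Real.cos_le_one x; linarith
  have h4 : Real.sqrt ((1 - Real.cos x)/2) ≤ |x/2| := h1 ▸ h2
  have h5 : (1 - Real.cos x)/2 ≤ |x/2| ^ 2 := by
    have := Real.sq_sqrt h3
    nlinarith [Real.sqrt_nonneg ((1 - Real.cos x)/2)]
  have h6 : |x/2| ^ 2 = x^2/4 := by
    rw [sq_abs]; ring
  linarith [h6 ▸ h5]

lemma norm_exp_I_sub_one (x : ℝ) : ‖Complex.exp (x * Complex.I) - 1‖ ≤ |x| := by
  have hexp : Complex.exp ((x:ℂ) * Complex.I) = (Real.cos x : ℂ) + Real.sin x * Complex.I := by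
    rw [Complex.exp_mul_I]
    norm_cast
  rw [hexp, Complex.norm_def, Complex.normSq_apply]
  have hre : ((Real.cos x : ℂ) + Real.sin x * Complex.I - 1).re = Real.cos x - 1 := by simp [Complex.cos_ofReal_re]
  have him : ((Real.cos x : ℂ) + Real.sin x * Complex.I - 1).im = Real.sin x := by simp [Complex.sin_ofReal_re]
  rw [hre, him]
  have hid : (Real.cos x - 1) * (Real.cos x - 1) + Real.sin x * Real.sin x
      = 2 - 2 * Real.cos x := by
    nlinarith [Real.sin_sq_add_cos_sq x]
  rw [hid]
  calc Real.sqrt (2 - 2 * Real.cos x) ≤ Real.sqrt (x ^ 2) := by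
        apply Real.sqrt_le_sqrt
        have := one_sub_cos_le x
        linarith
    _ = |x| := Real.sqrt_sq_eq_abs x

lemma norm_exp_I_sub_exp_I (x y : ℝ) :
    ‖Complex.exp (x * Complex.I) - Complex.exp (y * Complex.I)‖ ≤ |x - y| := by
  have hfac : Complex.exp ((x:ℂ) * Complex.I) - Complex.exp ((y:ℂ) * Complex.I)
      = Complex.exp ((y:ℂ) * Complex.I) * (Complex.exp (((x - y : ℝ) : ℂ) * Complex.I) - 1) := by
    rw [mul_sub, ← Complex.exp_add, mul_one]
    push_cast
    ring_nf
  rw [hfac, norm_mul]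
  have h1 : ‖Complex.exp ((y:ℂ) * Complex.I)‖ = 1 := by
    rw [Complex.norm_exp]
    simp
  rw [h1, one_mul]
  exact norm_exp_I_sub_one (x - y)

lemma norm_pow_sub_pow {a b : ℂ} {r : ℝ} (ha : ‖a‖ ≤ r) (hb : ‖b‖ ≤ r) (k : ℕ) :
    ‖a ^ k - b ^ k‖ ≤ k * r ^ (k - 1) * ‖a - b‖ := by
  have hr : 0 ≤ r := le_trans (norm_nonneg a) ha
  rw [← geom_sum₂_mul a b k, norm_mul]
  have hsum : ‖∑ i ∈ Finset.range k, a ^ i * b ^ (k - 1 - i)‖ ≤ k * r ^ (k - 1) := by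
    calc ‖∑ i ∈ Finset.range k, a ^ i * b ^ (k - 1 - i)‖
        ≤ ∑ i ∈ Finset.range k, ‖a ^ i * b ^ (k - 1 - i)‖ := norm_sum_le _ _
      _ ≤ ∑ i ∈ Finset.range k, r ^ (k - 1) := by
          apply Finset.sum_le_sum
          intro i hi
          rw [norm_mul, norm_pow, norm_pow]
          have hik : i + (k - 1 - i) = k - 1 := by
            have := Finset.mem_range.mp hi
            omega
          calc ‖a‖ ^ i * ‖b‖ ^ (k - 1 - i) ≤ r ^ i * r ^ (k - 1 - i) := by
                apply mul_le_mul (pow_le_pow_left₀ (norm_nonneg a) ha i)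
                  (pow_le_pow_left₀ (norm_nonneg b) hb _) (by positivity) (by positivity)
            _ = r ^ (k - 1) := by rw [← pow_add, hik]
      _ = k * r ^ (k - 1) := by rw [Finset.sum_const, Finset.card_range, nsmul_eq_mul]
  exact mul_le_mul_of_nonneg_right hsum (norm_nonneg _)

lemma rpow_tele {n : ℕ} (hn : 2 ≤ n) :
    (n : ℝ) ^ (-(9/8) : ℝ) ≤ 8 * (((n : ℝ) - 1) ^ (-(1/8) : ℝ) - (n : ℝ) ^ (-(1/8) : ℝ)) := by
  have hx2 : (2:ℝ) ≤ (n:ℝ) := by exact_mod_cast hn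
  have hx0 : (0:ℝ) < n := by linarith
  set x : ℝ := (n:ℝ) with hxdef
  set u : ℝ := x⁻¹ with hu
  have hu0 : 0 < u := by positivity
  have hu2 : u ≤ 1/2 := by
    rw [hu]
    rw [inv_le_comm₀ hx0 (by norm_num : (0:ℝ) < 1/2)]
    linarith
  have h1u : 0 < 1 - u := by linarith
  have ha : (0:ℝ) ≤ 1 + u/8 := by linarith
  have step1 : (1 + u/8) ^ (8:ℕ) ≤ (1-u)⁻¹ := by
    have hae : 1 + u/8 ≤ Real.exp (u/8) := by linarith [Real.add_one_le_exp (u/8)]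
    have h8 : (1 + u/8) ^ (8:ℕ) ≤ Real.exp (u/8) ^ (8:ℕ) := pow_le_pow_left₀ ha hae 8
    have hexp8 : Real.exp (u/8) ^ (8:ℕ) = Real.exp u := by
      rw [← Real.exp_nat_mul]; congr 1; push_cast; ring
    have hles : Real.exp u ≤ (1-u)⁻¹ := by
      rw [inv_eq_one_div, le_div_iff₀ h1u]
      exact exp_one_sub_le u
    calc (1 + u/8) ^ (8:ℕ) ≤ Real.exp (u/8) ^ (8:ℕ) := h8
      _ = Real.exp u := hexp8
      _ ≤ (1-u)⁻¹ := hles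
  have step2 : 1 + u/8 ≤ ((1-u)⁻¹) ^ ((1/8):ℝ) := by
    have hbase : 1 + u/8 = ((1 + u/8) ^ ((8:ℕ):ℝ)) ^ ((1/8):ℝ) := by
      rw [← Real.rpow_mul ha]
      norm_num
    rw [hbase]
    apply Real.rpow_le_rpow (by positivity) _ (by norm_num)
    rwa [Real.rpow_natCast]
  have step3 : ((1-u)⁻¹) ^ ((1/8):ℝ) = (1-u) ^ (-(1/8):ℝ) := by
    rw [Real.inv_rpow h1u.le, ← Real.rpow_neg h1u.le]
  have step4 : x - 1 = x * (1 - u) := by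
    rw [hu]; field_simp
  have step5 : (x-1) ^ (-(1/8):ℝ) = x ^ (-(1/8):ℝ) * (1-u) ^ (-(1/8):ℝ) := by
    rw [step4, Real.mul_rpow hx0.le h1u.le]
  have hxm : (0:ℝ) ≤ x ^ (-(1/8):ℝ) := by positivity
  have hstep : u/8 ≤ (1-u) ^ (-(1/8):ℝ) - 1 := by
    rw [← step3]; linarith
  calc x ^ (-(9/8):ℝ) = x ^ (-(1/8):ℝ) * x ^ (-1:ℝ) := by
        rw [← Real.rpow_add hx0]; norm_num
    _ = x ^ (-(1/8):ℝ) * u := by rw [Real.rpow_neg_one]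
    _ = 8 * (x ^ (-(1/8):ℝ) * (u/8)) := by ring
    _ ≤ 8 * (x ^ (-(1/8):ℝ) * ((1-u) ^ (-(1/8):ℝ) - 1)) := by
        apply mul_le_mul_of_nonneg_left (mul_le_mul_of_nonneg_left hstep hxm) (by norm_num)
    _ = 8 * ((x-1) ^ (-(1/8):ℝ) - x ^ (-(1/8):ℝ)) := by rw [step5]; ring

lemma sum_rpow_le (S : Finset ℕ) (h2 : ∀ n ∈ S, 2 ≤ n) (N : ℕ) (hN : ∀ n ∈ S, n ≤ N) :
    ∑ n ∈ S, (n:ℝ) ^ (-(9/8):ℝ) ≤ 8 := by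
  have hsub : S ⊆ Finset.Icc 2 N := fun n hn => Finset.mem_Icc.mpr ⟨h2 n hn, hN n hn⟩
  have h1 : ∑ n ∈ S, (n:ℝ)^(-(9/8):ℝ) ≤ ∑ n ∈ Finset.Icc 2 N, (n:ℝ)^(-(9/8):ℝ) :=
    Finset.sum_le_sum_of_subset_of_nonneg hsub (fun i _ _ => by positivity)
  set F : ℕ → ℝ := fun i => 8 * ((i:ℝ)+1)^(-(1/8):ℝ) with hF
  have h3 : ∀ i : ℕ, ((2+i:ℕ):ℝ)^(-(9/8):ℝ) ≤ F i - F (i+1) := by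
    intro i
    have h := rpow_tele (n := 2+i) (by omega)
    have e1 : ((2+i:ℕ):ℝ) - 1 = (i:ℝ)+1 := by push_cast; ring
    have e2 : ((2+i:ℕ):ℝ) = ((i+1:ℕ):ℝ)+1 := by push_cast; ring
    rw [e1] at h
    calc ((2+i:ℕ):ℝ)^(-(9/8):ℝ) ≤ 8 * (((i:ℝ)+1) ^ (-(1/8):ℝ) - ((2+i:ℕ):ℝ) ^ (-(1/8):ℝ)) := h
      _ = F i - F (i+1) := by rw [hF]; simp only []; rw [e2]; push_cast; ring
  calc ∑ n ∈ S, (n:ℝ)^(-(9/8):ℝ) ≤ ∑ n ∈ Finset.Icc 2 N, (n:ℝ)^(-(9/8):ℝ) := h1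
    _ = ∑ i ∈ Finset.range (N+1-2), ((2+i:ℕ):ℝ)^(-(9/8):ℝ) := by
        rw [← Finset.Ico_add_one_right_eq_Icc, Finset.sum_Ico_eq_sum_range]
    _ ≤ ∑ i ∈ Finset.range (N+1-2), (F i - F (i+1)) := Finset.sum_le_sum (fun i _ => h3 i)
    _ = F 0 - F (N+1-2) := Finset.sum_range_sub' F (N+1-2)
    _ ≤ F 0 := by
        have : (0:ℝ) ≤ F (N+1-2) := by rw [hF]; positivity
        linarith
    _ = 8 := by rw [hF]; norm_num



lemma integral_tsum_circ {φ : ℕ → ℝ → ℂ}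
    (hm : ∀ k, AEStronglyMeasurable (φ k) (volume.restrict (Set.Ioc (0:ℝ) 1)))
    {C : ℕ → ℝ} (hC : ∀ k t, ‖φ k t‖ ≤ C k) (hCs : Summable C) :
    ∫ t in Set.Ioc (0:ℝ) 1, ∑' k, φ k t = ∑' k, ∫ t in Set.Ioc (0:ℝ) 1, φ k t := by
  apply integral_tsum hm
  have hC0 : ∀ k, 0 ≤ C k := fun k => le_trans (norm_nonneg _) (hC k 0)
  have hb : ∀ k : ℕ, (∫⁻ t in Set.Ioc (0:ℝ) 1, (‖φ k t‖₊ : ℝ≥0∞)) ≤ ENNReal.ofReal (C k) := by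
    intro k
    calc ∫⁻ t in Set.Ioc (0:ℝ) 1, (‖φ k t‖₊ : ℝ≥0∞)
        ≤ ∫⁻ _t in Set.Ioc (0:ℝ) 1, ENNReal.ofReal (C k) := by
          apply lintegral_mono
          intro t
          show (‖φ k t‖₊ : ℝ≥0∞) ≤ ENNReal.ofReal (C k)
          rw [← ENNReal.ofReal_coe_nnreal, coe_nnnorm]
          exact ENNReal.ofReal_le_ofReal (hC k t)
      _ = ENNReal.ofReal (C k) := by
          rw [lintegral_const, nu_univ, mul_one]
  refine ne_top_of_le_ne_top ?_ (ENNReal.tsum_le_tsum hb)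
  rw [← ENNReal.ofReal_tsum_of_nonneg hC0 hCs]
  exact ENNReal.ofReal_ne_top

lemma moments_lemma {w w' : ℂ} {r η : ℝ} (hw : ‖w‖ = r) (hw' : ‖w'‖ = r)
    (hr1 : r < 1) (hd : ‖w - w'‖ ≤ r * η) (hη0 : 0 ≤ η) :
    (∫ t in Set.Ioc (0:ℝ) 1,
        (Real.log ‖1 - circ t * w'‖ - Real.log ‖1 - circ t * w‖)) = 0 ∧
    (∫ t in Set.Ioc (0:ℝ) 1,
        (Real.log ‖1 - circ t * w'‖ - Real.log ‖1 - circ t * w‖) ^ 2)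
      ≤ η^2 * r^2 / (2 * (1 - r^2)) := by
  have hr0 : 0 ≤ r := hw ▸ norm_nonneg w
  have hr2 : r^2 < 1 := by nlinarith
  have hzw : ∀ t, ‖circ t * w‖ = r := fun t => by rw [norm_mul, norm_circ, one_mul, hw]
  have hzw' : ∀ t, ‖circ t * w'‖ = r := fun t => by rw [norm_mul, norm_circ, one_mul, hw']
  set c : ℕ → ℂ := fun k => (w ^ k - w' ^ k) / k with hcdef
  have hc0 : c 0 = 0 := by simp [hcdef]
  have hck : ∀ k, ‖c k‖ ≤ r ^ k * η := by
    intro k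
    cases k with
    | zero => simpa [hc0] using (by positivity : (0:ℝ) ≤ r ^ 0 * η)
    | succ n =>
      have hb := norm_pow_sub_pow (le_of_eq hw) (le_of_eq hw') (n+1)
      have hnorm : ‖c (n+1)‖ = ‖w ^ (n+1) - w' ^ (n+1)‖ / ((n:ℝ)+1) := by
        rw [hcdef]
        simp only []
        rw [norm_div]
        congr 1
        rw [show ((n+1:ℕ):ℂ) = (((n+1:ℕ):ℝ):ℂ) by push_cast; ring, Complex.norm_real]
        rw [Real.norm_eq_abs, abs_of_nonneg (by positivity)]
        push_cast; ring
      rw [hnorm, div_le_iff₀ (by positivity)]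
      have h1 : ((n+1:ℕ):ℝ) * r ^ ((n+1) - 1) * ‖w - w'‖ ≤ ((n:ℝ)+1) * r ^ n * (r * η) := by
        have : ((n+1:ℕ):ℝ) * r ^ ((n+1) - 1) = ((n:ℝ)+1) * r ^ n := by
          push_cast; norm_num
        rw [this]
        exact mul_le_mul_of_nonneg_left hd (by positivity)
      calc ‖w ^ (n+1) - w' ^ (n+1)‖ ≤ ((n+1:ℕ):ℝ) * r ^ ((n+1) - 1) * ‖w - w'‖ := hb
        _ ≤ ((n:ℝ)+1) * r ^ n * (r * η) := h1
        _ = r ^ (n+1) * η * ((n:ℝ)+1) := by ring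
  have hsumgeo : Summable (fun k : ℕ => r ^ k * η) :=
    (summable_geometric_of_lt_one hr0 hr1).mul_right η
  have hsumc : Summable (fun k => ‖c k‖) :=
    Summable.of_nonneg_of_le (fun k => norm_nonneg _) hck hsumgeo
  set M : ℝ := ∑' k, ‖c k‖ with hMdef
  have hsumsq : Summable (fun k : ℕ => (r^2) ^ k * η^2) :=
    (summable_geometric_of_lt_one (by positivity) hr2).mul_right _
  have hcksq : ∀ k, ‖c k‖^2 ≤ (r^2) ^ k * η^2 := by
    intro k
    calc ‖c k‖^2 ≤ (r ^ k * η)^2 := by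
          apply pow_le_pow_left₀ (norm_nonneg _) (hck k)
      _ = (r^2) ^ k * η^2 := by rw [mul_pow, ← pow_mul, ← pow_mul]; ring_nf
  have hsumc2 : Summable (fun k => ‖c k‖^2) :=
    Summable.of_nonneg_of_le (fun k => by positivity) hcksq hsumsq
  set S : ℝ := ∑' k, ‖c k‖^2 with hSdef
  -- G and its expansion
  set G : ℝ → ℂ := fun t => Complex.log (1 - circ t * w') - Complex.log (1 - circ t * w)
    with hGdef
  have hG : ∀ t, HasSum (fun k => c k * circ t ^ k) (G t) := by
    intro t
    have h1 : HasSum (fun k : ℕ => (circ t * w)^k / k) (-Complex.log (1 - circ t * w)) :=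
      Complex.hasSum_taylorSeries_neg_log (by rw [hzw t]; exact hr1)
    have h2 : HasSum (fun k : ℕ => (circ t * w')^k / k) (-Complex.log (1 - circ t * w')) :=
      Complex.hasSum_taylorSeries_neg_log (by rw [hzw' t]; exact hr1)
    have h3 := h1.sub h2
    have hfun : (fun k : ℕ => (circ t * w)^k / k - (circ t * w')^k / k)
        = fun k => c k * circ t ^ k := by
      funext k
      rw [hcdef]
      simp only [mul_pow]
      ring
    have hval : -Complex.log (1 - circ t * w) - -Complex.log (1 - circ t * w') = G t := by
      rw [hGdef]; ring
    rw [hfun, hval] at h3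
    exact h3
  have hGnorm : ∀ t, ‖G t‖ ≤ M := by
    intro t
    have heq : ∀ k, ‖c k * circ t ^ k‖ = ‖c k‖ := fun k => by
      rw [norm_mul, norm_pow, norm_circ, one_pow, mul_one]
    rw [← (hG t).tsum_eq]
    calc ‖∑' k, c k * circ t ^ k‖ ≤ ∑' k, ‖c k * circ t ^ k‖ := by
          apply norm_tsum_le_tsum_norm
          simpa only [heq] using hsumc
      _ = M := by rw [hMdef]; exact tsum_congr heq
  have hGmeas : Measurable G := by
    rw [hGdef]
    apply Measurable.sub
    · exact Complex.measurable_log.comp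
        (measurable_const.sub (measurable_circ.mul_const w'))
    · exact Complex.measurable_log.comp
        (measurable_const.sub (measurable_circ.mul_const w))
  have hGconjmeas : Measurable (fun t => (starRingEnd ℂ) (G t)) :=
    Complex.continuous_conj.measurable.comp hGmeas
  -- ∫ G = 0
  have hEG : (∫ t in Set.Ioc (0:ℝ) 1, G t) = 0 := by
    have h1 : (∫ t in Set.Ioc (0:ℝ) 1, G t)
        = ∫ t in Set.Ioc (0:ℝ) 1, ∑' k, c k * circ t ^ k :=
      integral_congr_ae (Filter.Eventually.of_forall (fun t => ((hG t).tsum_eq).symm))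
    rw [h1, integral_tsum_circ
      (φ := fun k t => c k * circ t ^ k)
      (fun k => (continuous_const.mul (continuous_circ.pow k)).aestronglyMeasurable)
      (C := fun k => ‖c k‖)
      (fun k t => by rw [norm_mul, norm_pow, norm_circ, one_pow, mul_one]) hsumc]
    have hterm : ∀ k : ℕ, (∫ t in Set.Ioc (0:ℝ) 1, c k * circ t ^ k)
        = c k * (if k = 0 then 1 else 0) := by
      intro k
      rw [integral_const_mul, integral_circ_pow]
    rw [tsum_congr hterm]
    rw [tsum_eq_single 0 (by intro k hk; simp [hk])]
    simp [hc0]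
  -- ∫ circ^k * G = 0
  have hEzk : ∀ k : ℕ, (∫ t in Set.Ioc (0:ℝ) 1, circ t ^ k * G t) = 0 := by
    intro k
    have hs : ∀ t, HasSum (fun j => c j * circ t ^ (k + j)) (circ t ^ k * G t) := by
      intro t
      have h0 := (hG t).mul_left (circ t ^ k)
      have hfun : (fun j => circ t ^ k * (c j * circ t ^ j))
          = fun j => c j * circ t ^ (k + j) := by
        funext j; rw [pow_add]; ring
      rwa [hfun] at h0
    have h1 : (∫ t in Set.Ioc (0:ℝ) 1, circ t ^ k * G t)
        = ∫ t in Set.Ioc (0:ℝ) 1, ∑' j, c j * circ t ^ (k + j) :=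
      integral_congr_ae (Filter.Eventually.of_forall (fun t => ((hs t).tsum_eq).symm))
    rw [h1, integral_tsum_circ
      (φ := fun j t => c j * circ t ^ (k + j))
      (fun j => (continuous_const.mul (continuous_circ.pow (k+j))).aestronglyMeasurable)
      (C := fun j => ‖c j‖)
      (fun j t => by rw [norm_mul, norm_pow, norm_circ, one_pow, mul_one]) hsumc]
    have hterm : ∀ j : ℕ, (∫ t in Set.Ioc (0:ℝ) 1, c j * circ t ^ (k + j)) = 0 := by
      intro j
      rw [integral_const_mul, integral_circ_pow]
      rcases Nat.eq_zero_or_pos (k + j) with h | h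
      · have hj : j = 0 := by omega
        simp [hj, hc0]
      · simp [Nat.pos_iff_ne_zero.mp h]; intro hk hj; omega
    rw [tsum_congr hterm, tsum_zero]
  -- ∫ circ^k * conj G = conj (c k)
  have hconjsum : ∀ t, HasSum (fun j => (starRingEnd ℂ) (c j) * (starRingEnd ℂ) (circ t ^ j))
      ((starRingEnd ℂ) (G t)) := by
    intro t
    have h0 := (hG t).star
    have hfun : (fun j => star (c j * circ t ^ j))
        = fun j => (starRingEnd ℂ) (c j) * (starRingEnd ℂ) (circ t ^ j) := by
      funext j
      rw [star_mul']
      rfl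
    rwa [hfun] at h0
  have hEck : ∀ k : ℕ, (∫ t in Set.Ioc (0:ℝ) 1, circ t ^ k * (starRingEnd ℂ) (G t))
      = (starRingEnd ℂ) (c k) := by
    intro k
    have hs : ∀ t, HasSum (fun j => (starRingEnd ℂ) (c j) * (circ t ^ k * (starRingEnd ℂ) (circ t ^ j)))
        (circ t ^ k * (starRingEnd ℂ) (G t)) := by
      intro t
      have h0 := (hconjsum t).mul_left (circ t ^ k)
      have hfun : (fun j => circ t ^ k * ((starRingEnd ℂ) (c j) * (starRingEnd ℂ) (circ t ^ j)))
          = fun j => (starRingEnd ℂ) (c j) * (circ t ^ k * (starRingEnd ℂ) (circ t ^ j)) := by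
        funext j; ring
      rwa [hfun] at h0
    have h1 : (∫ t in Set.Ioc (0:ℝ) 1, circ t ^ k * (starRingEnd ℂ) (G t))
        = ∫ t in Set.Ioc (0:ℝ) 1,
            ∑' j, (starRingEnd ℂ) (c j) * (circ t ^ k * (starRingEnd ℂ) (circ t ^ j)) :=
      integral_congr_ae (Filter.Eventually.of_forall (fun t => ((hs t).tsum_eq).symm))
    have hmeas : ∀ j : ℕ, AEStronglyMeasurable
        (fun t => (starRingEnd ℂ) (c j) * (circ t ^ k * (starRingEnd ℂ) (circ t ^ j)))
        (volume.restrict (Set.Ioc (0:ℝ) 1)) := by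
      intro j
      apply Measurable.aestronglyMeasurable
      exact measurable_const.mul ((measurable_circ.pow_const k).mul
        (Complex.continuous_conj.measurable.comp (measurable_circ.pow_const j)))
    rw [h1, integral_tsum_circ hmeas (C := fun j => ‖c j‖)
      (fun j t => by
        rw [norm_mul, norm_mul, norm_pow, norm_circ, RCLike.norm_conj, RCLike.norm_conj,
          norm_pow, norm_circ]
        simp) hsumc]
    have hterm : ∀ j : ℕ,
        (∫ t in Set.Ioc (0:ℝ) 1, (starRingEnd ℂ) (c j) * (circ t ^ k * (starRingEnd ℂ) (circ t ^ j)))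
        = (starRingEnd ℂ) (c j) * (if k = j then 1 else 0) := by
      intro j
      rw [integral_const_mul, integral_circ_pow_mul_conj]
    rw [tsum_congr hterm]
    rw [tsum_eq_single k (by intro j hj; simp [Ne.symm hj])]
    simp
  -- ∫ G * conj G = S
  have hEGG : (∫ t in Set.Ioc (0:ℝ) 1, G t * (starRingEnd ℂ) (G t)) = ((S : ℝ) : ℂ) := by
    have hs : ∀ t, HasSum (fun k => c k * (circ t ^ k * (starRingEnd ℂ) (G t)))
        (G t * (starRingEnd ℂ) (G t)) := by
      intro t
      have h0 := (hG t).mul_right ((starRingEnd ℂ) (G t))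
      have hfun : (fun k => c k * circ t ^ k * (starRingEnd ℂ) (G t))
          = fun k => c k * (circ t ^ k * (starRingEnd ℂ) (G t)) := by
        funext k; ring
      rwa [hfun] at h0
    have h1 : (∫ t in Set.Ioc (0:ℝ) 1, G t * (starRingEnd ℂ) (G t))
        = ∫ t in Set.Ioc (0:ℝ) 1, ∑' k, c k * (circ t ^ k * (starRingEnd ℂ) (G t)) :=
      integral_congr_ae (Filter.Eventually.of_forall (fun t => ((hs t).tsum_eq).symm))
    have hM0 : 0 ≤ M := tsum_nonneg (fun k => norm_nonneg _)
    have hmeas : ∀ k : ℕ, AEStronglyMeasurable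
        (fun t => c k * (circ t ^ k * (starRingEnd ℂ) (G t)))
        (volume.restrict (Set.Ioc (0:ℝ) 1)) := by
      intro k
      apply Measurable.aestronglyMeasurable
      exact measurable_const.mul ((measurable_circ.pow_const k).mul hGconjmeas)
    rw [h1, integral_tsum_circ hmeas (C := fun k => ‖c k‖ * M)
      (fun k t => by
        rw [norm_mul, norm_mul, norm_pow, norm_circ, RCLike.norm_conj, one_pow, one_mul]
        exact mul_le_mul_of_nonneg_left (hGnorm t) (norm_nonneg _))
      (hsumc.mul_right M)]
    have hterm : ∀ k : ℕ,
        (∫ t in Set.Ioc (0:ℝ) 1, c k * (circ t ^ k * (starRingEnd ℂ) (G t)))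
        = c k * (starRingEnd ℂ) (c k) := by
      intro k
      rw [integral_const_mul, hEck]
    rw [tsum_congr hterm]
    have hsq : ∀ k, c k * (starRingEnd ℂ) (c k) = ((‖c k‖^2 : ℝ) : ℂ) := by
      intro k
      rw [Complex.mul_conj, Complex.normSq_eq_norm_sq]
    rw [tsum_congr hsq, hSdef]
    exact (Complex.ofRealCLM.map_tsum hsumc2).symm
  -- ∫ G * G = 0
  have hEG2 : (∫ t in Set.Ioc (0:ℝ) 1, G t * G t) = 0 := by
    have hs : ∀ t, HasSum (fun k => c k * (circ t ^ k * G t)) (G t * G t) := by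
      intro t
      have h0 := (hG t).mul_right (G t)
      have hfun : (fun k => c k * circ t ^ k * G t)
          = fun k => c k * (circ t ^ k * G t) := by
        funext k; ring
      rwa [hfun] at h0
    have h1 : (∫ t in Set.Ioc (0:ℝ) 1, G t * G t)
        = ∫ t in Set.Ioc (0:ℝ) 1, ∑' k, c k * (circ t ^ k * G t) :=
      integral_congr_ae (Filter.Eventually.of_forall (fun t => ((hs t).tsum_eq).symm))
    have hmeas : ∀ k : ℕ, AEStronglyMeasurable
        (fun t => c k * (circ t ^ k * G t)) (volume.restrict (Set.Ioc (0:ℝ) 1)) := by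
      intro k
      apply Measurable.aestronglyMeasurable
      exact measurable_const.mul ((measurable_circ.pow_const k).mul hGmeas)
    rw [h1, integral_tsum_circ hmeas (C := fun k => ‖c k‖ * M)
      (fun k t => by
        rw [norm_mul, norm_mul, norm_pow, norm_circ, one_pow, one_mul]
        exact mul_le_mul_of_nonneg_left (hGnorm t) (norm_nonneg _))
      (hsumc.mul_right M)]
    have hterm : ∀ k : ℕ,
        (∫ t in Set.Ioc (0:ℝ) 1, c k * (circ t ^ k * G t)) = 0 := by
      intro k
      rw [integral_const_mul, hEzk, mul_zero]
    rw [tsum_congr hterm, tsum_zero]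
  -- integrability
  have intG : Integrable G (volume.restrict (Set.Ioc (0:ℝ) 1)) := by
    have hM0 : 0 ≤ M := tsum_nonneg (fun k => norm_nonneg _)
    exact Integrable.mono' (integrable_const M) hGmeas.aestronglyMeasurable
      (Filter.Eventually.of_forall hGnorm)
  have intGc : Integrable (fun t => (starRingEnd ℂ) (G t)) (volume.restrict (Set.Ioc (0:ℝ) 1)) := by
    exact Integrable.mono' (integrable_const M) hGconjmeas.aestronglyMeasurable
      (Filter.Eventually.of_forall (fun t => by rw [RCLike.norm_conj]; exact hGnorm t))
  have intGG : Integrable (fun t => G t * G t) (volume.restrict (Set.Ioc (0:ℝ) 1)) := by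
    refine Integrable.mono' (integrable_const (M*M)) (hGmeas.mul hGmeas).aestronglyMeasurable
      (Filter.Eventually.of_forall (fun t => ?_))
    rw [norm_mul]
    exact mul_le_mul (hGnorm t) (hGnorm t) (norm_nonneg _)
      (le_trans (norm_nonneg _) (hGnorm 0))
  have intGGc : Integrable (fun t => G t * (starRingEnd ℂ) (G t))
      (volume.restrict (Set.Ioc (0:ℝ) 1)) := by
    refine Integrable.mono' (integrable_const (M*M)) (hGmeas.mul hGconjmeas).aestronglyMeasurable
      (Filter.Eventually.of_forall (fun t => ?_))
    rw [norm_mul, RCLike.norm_conj]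
    exact mul_le_mul (hGnorm t) (hGnorm t) (norm_nonneg _)
      (le_trans (norm_nonneg _) (hGnorm 0))
  have intGcGc : Integrable (fun t => (starRingEnd ℂ) (G t) * (starRingEnd ℂ) (G t))
      (volume.restrict (Set.Ioc (0:ℝ) 1)) := by
    refine Integrable.mono' (integrable_const (M*M)) (hGconjmeas.mul hGconjmeas).aestronglyMeasurable
      (Filter.Eventually.of_forall (fun t => ?_))
    rw [norm_mul]
    simp only [RCLike.norm_conj]
    exact mul_le_mul (hGnorm t) (hGnorm t) (norm_nonneg _)
      (le_trans (norm_nonneg _) (hGnorm 0))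
  -- relation X = re G
  set X : ℝ → ℝ := fun t => Real.log ‖1 - circ t * w'‖ - Real.log ‖1 - circ t * w‖ with hXdef
  have hXC : ∀ t, ((X t : ℝ) : ℂ) = (G t + (starRingEnd ℂ) (G t)) / 2 := by
    intro t
    have hre : X t = (G t).re := by
      rw [hXdef, hGdef]
      simp only [Complex.sub_re, Complex.log_re]
    rw [hre, Complex.add_conj]
    push_cast
    ring
  constructor
  · -- first moment
    have h1 : ((∫ t in Set.Ioc (0:ℝ) 1, X t : ℝ) : ℂ)
        = ∫ t in Set.Ioc (0:ℝ) 1, ((X t : ℝ) : ℂ) := integral_ofReal.symm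
    have h2 : (∫ t in Set.Ioc (0:ℝ) 1, ((X t : ℝ) : ℂ))
        = ∫ t in Set.Ioc (0:ℝ) 1, (G t + (starRingEnd ℂ) (G t)) / 2 :=
      integral_congr_ae (Filter.Eventually.of_forall (fun t => hXC t))
    have h3 : (∫ t in Set.Ioc (0:ℝ) 1, (G t + (starRingEnd ℂ) (G t)) / 2)
        = ((∫ t in Set.Ioc (0:ℝ) 1, G t) + ∫ t in Set.Ioc (0:ℝ) 1, (starRingEnd ℂ) (G t)) / 2 := by
      rw [integral_div, integral_add intG intGc]
    have h4 : (∫ t in Set.Ioc (0:ℝ) 1, (starRingEnd ℂ) (G t))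
        = (starRingEnd ℂ) (∫ t in Set.Ioc (0:ℝ) 1, G t) := integral_conj
    have : ((∫ t in Set.Ioc (0:ℝ) 1, X t : ℝ) : ℂ) = 0 := by
      rw [h1, h2, h3, h4, hEG]
      simp
    exact_mod_cast this
  · -- second moment
    have hX2val : (∫ t in Set.Ioc (0:ℝ) 1, (X t)^2) = S / 2 := by
      have h1 : ((∫ t in Set.Ioc (0:ℝ) 1, (X t)^2 : ℝ) : ℂ)
          = ∫ t in Set.Ioc (0:ℝ) 1, (((X t)^2 : ℝ) : ℂ) := integral_ofReal.symm
      have h2 : ∀ t, (((X t)^2 : ℝ) : ℂ)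
          = (G t * G t + 2 * (G t * (starRingEnd ℂ) (G t))
              + (starRingEnd ℂ) (G t) * (starRingEnd ℂ) (G t)) / 4 := by
        intro t
        have : (((X t)^2 : ℝ) : ℂ) = ((X t : ℝ) : ℂ)^2 := by push_cast; ring
        rw [this, hXC t]
        ring
      have h3 : (∫ t in Set.Ioc (0:ℝ) 1, (((X t)^2 : ℝ) : ℂ))
          = ((∫ t in Set.Ioc (0:ℝ) 1, G t * G t)
            + ((2:ℂ) * ∫ t in Set.Ioc (0:ℝ) 1, G t * (starRingEnd ℂ) (G t))
            + ∫ t in Set.Ioc (0:ℝ) 1, (starRingEnd ℂ) (G t) * (starRingEnd ℂ) (G t)) / 4 := by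
        rw [show (fun t => (((X t)^2 : ℝ) : ℂ)) = fun t =>
          (G t * G t + 2 * (G t * (starRingEnd ℂ) (G t))
              + (starRingEnd ℂ) (G t) * (starRingEnd ℂ) (G t)) / 4 from funext h2]
        have intB : Integrable (fun t => (2:ℂ) * (G t * (starRingEnd ℂ) (G t)))
            (volume.restrict (Set.Ioc (0:ℝ) 1)) := intGGc.const_mul 2
        have intAB : Integrable
            (fun t => G t * G t + (2:ℂ) * (G t * (starRingEnd ℂ) (G t)))
            (volume.restrict (Set.Ioc (0:ℝ) 1)) := intGG.add intB
        rw [integral_div]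
        rw [integral_add intAB intGcGc]
        rw [integral_add intGG intB]
        rw [integral_const_mul]
      have h4 : (∫ t in Set.Ioc (0:ℝ) 1, (starRingEnd ℂ) (G t) * (starRingEnd ℂ) (G t)) = 0 := by
        have : (fun t => (starRingEnd ℂ) (G t) * (starRingEnd ℂ) (G t))
            = fun t => (starRingEnd ℂ) (G t * G t) := by
          funext t; rw [map_mul]
        rw [this, integral_conj, hEG2, map_zero]
      have h5 : ((∫ t in Set.Ioc (0:ℝ) 1, (X t)^2 : ℝ) : ℂ) = ((S/2 : ℝ) : ℂ) := by
        rw [h1, h3, h4, hEG2, hEGG]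
        push_cast
        ring
      exact_mod_cast h5
    rw [hX2val]
    -- S ≤ η² r² / (1 - r²)
    have hshift : Summable (fun k => ‖c (k+1)‖^2) := (summable_nat_add_iff 1).mpr hsumc2
    have hSsplit : S = ‖c 0‖^2 + ∑' k, ‖c (k+1)‖^2 := by
      rw [hSdef]
      exact Summable.tsum_eq_zero_add hsumc2
    have hSbound : S ≤ η^2 * r^2 / (1 - r^2) := by
      have hle : ∑' k, ‖c (k+1)‖^2 ≤ ∑' k : ℕ, (r^2)^(k+1) * η^2 := by
        apply Summable.tsum_le_tsum _ hshift ((summable_nat_add_iff 1).mpr hsumsq)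
        intro k
        exact hcksq (k+1)
      have hgeo : ∑' k : ℕ, (r^2)^(k+1) * η^2 = η^2 * r^2 / (1 - r^2) := by
        have h6 : ∀ k : ℕ, (r^2)^(k+1) * η^2 = (r^2 * η^2) * (r^2)^k := by
          intro k; ring
        rw [tsum_congr h6, tsum_mul_left, tsum_geometric_of_lt_one (by positivity) hr2]
        field_simp
      have h7 : ‖c 0‖^2 = 0 := by rw [hc0]; simp
      rw [hSsplit, h7, zero_add]
      rw [← hgeo]
      exact hle
    have h1r2 : 0 < 1 - r^2 := by linarith
    have h8 : S * (1-r^2) ≤ η^2*r^2 := (le_div_iff₀ h1r2).mp hSbound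
    rw [div_le_div_iff₀ (by linarith) (by linarith)]
    nlinarith [h8]





lemma prime_core {w w' : ℂ} {r η : ℝ} (α : ℝ) (hw : ‖w‖ = r) (hw' : ‖w'‖ = r)
    (hr : r ≤ 7/9) (hd : ‖w - w'‖ ≤ r * η) (hη0 : 0 ≤ η) (hη1 : η ≤ 1) :
    (∫ t in Set.Ioc (0:ℝ) 1,
        Real.exp (2*α*(Real.log ‖1 - circ t * w'‖ - Real.log ‖1 - circ t * w‖)))
      ≤ Real.exp (9* |α| *(r*η)) ∧
    (9* |α| *r ≤ 1 →
      (∫ t in Set.Ioc (0:ℝ) 1,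
        Real.exp (2*α*(Real.log ‖1 - circ t * w'‖ - Real.log ‖1 - circ t * w‖)))
      ≤ Real.exp (α^2*η^2*r^2 + 3*α^2*r^4 + 99* |α|^3*r^3)) := by
  have hr0 : 0 ≤ r := hw ▸ norm_nonneg w
  have hr1 : r < 1 := lt_of_le_of_lt hr (by norm_num)
  have hr2 : r^2 ≤ 49/81 := by nlinarith
  have h1r2 : 32/81 ≤ 1 - r^2 := by linarith
  set X : ℝ → ℝ := fun t => Real.log ‖1 - circ t * w'‖ - Real.log ‖1 - circ t * w‖ with hXdef
  have hzw : ∀ t, ‖circ t * w‖ = r := fun t => by rw [norm_mul, norm_circ, one_mul, hw]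
  have hzw' : ∀ t, ‖circ t * w'‖ = r := fun t => by rw [norm_mul, norm_circ, one_mul, hw']
  have hlow : ∀ t, 1 - r ≤ ‖1 - circ t * w‖ := by
    intro t
    calc 1 - r = ‖(1:ℂ)‖ - ‖circ t * w‖ := by rw [norm_one, hzw]
      _ ≤ ‖1 - circ t * w‖ := norm_sub_norm_le _ _
  have hlow' : ∀ t, 1 - r ≤ ‖1 - circ t * w'‖ := by
    intro t
    calc 1 - r = ‖(1:ℂ)‖ - ‖circ t * w'‖ := by rw [norm_one, hzw']
      _ ≤ ‖1 - circ t * w'‖ := norm_sub_norm_le _ _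
  have h1r : (0:ℝ) < 1 - r := by linarith
  -- |X t| ≤ (9/2) r η
  have hXb : ∀ t, |X t| ≤ 9/2*(r*η) := by
    intro t
    have hdiff : |‖1 - circ t * w'‖ - ‖1 - circ t * w‖| ≤ r * η := by
      calc |‖1 - circ t * w'‖ - ‖1 - circ t * w‖| ≤ ‖(1 - circ t * w') - (1 - circ t * w)‖ :=
            abs_norm_sub_norm_le _ _
        _ = ‖circ t * (w - w')‖ := by ring_nf
        _ = ‖w - w'‖ := by rw [norm_mul, norm_circ, one_mul]
        _ ≤ r * η := hd
    have h1 := log_ratio_abs h1r (hlow t) (hlow' t) hdiff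
    calc |X t| ≤ (r*η) / (1-r) := h1
      _ ≤ (r*η) / (2/9) := by
          apply div_le_div_of_nonneg_left (by positivity) (by norm_num) (by linarith)
      _ = 9/2*(r*η) := by ring
  -- measurability / integrability
  have hXmeas : Measurable X := by
    rw [hXdef]
    apply Measurable.sub <;>
      exact Real.measurable_log.comp
        ((measurable_const.sub (measurable_circ.mul_const _)).norm)
  have hXint : Integrable X (volume.restrict (Set.Ioc (0:ℝ) 1)) :=
    Integrable.mono' (integrable_const (9/2*(r*η))) hXmeas.aestronglyMeasurable
      (Filter.Eventually.of_forall (fun t => by rw [Real.norm_eq_abs]; exact hXb t))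
  have hX2int : Integrable (fun t => (X t)^2) (volume.restrict (Set.Ioc (0:ℝ) 1)) := by
    refine Integrable.mono' (integrable_const ((9/2*(r*η))^2))
      (hXmeas.pow_const 2).aestronglyMeasurable
      (Filter.Eventually.of_forall (fun t => ?_))
    rw [Real.norm_eq_abs, abs_pow]
    apply pow_le_pow_left₀ (abs_nonneg _) (hXb t)
  have hexpint : Integrable (fun t => Real.exp (2*α*X t)) (volume.restrict (Set.Ioc (0:ℝ) 1)) := by
    refine Integrable.mono' (integrable_const (Real.exp (9* |α| *(r*η))))
      (Real.measurable_exp.comp (hXmeas.const_mul (2*α))).aestronglyMeasurable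
      (Filter.Eventually.of_forall (fun t => ?_))
    rw [Real.norm_eq_abs, Real.abs_exp, Real.exp_le_exp]
    calc 2*α*X t ≤ |2*α*X t| := le_abs_self _
      _ = 2* |α| * |X t| := by rw [abs_mul, abs_mul]; norm_num
      _ ≤ 2* |α| *(9/2*(r*η)) := by
          apply mul_le_mul_of_nonneg_left (hXb t) (by positivity)
      _ = 9* |α| *(r*η) := by ring
  have hmom := moments_lemma hw hw' hr1 hd hη0
  constructor
  · -- crude bound
    calc (∫ t in Set.Ioc (0:ℝ) 1, Real.exp (2*α*X t))
        ≤ ∫ _t in Set.Ioc (0:ℝ) 1, Real.exp (9* |α| *(r*η)) := by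
          apply integral_mono hexpint (integrable_const _)
          intro t
          rw [Real.exp_le_exp]
          calc 2*α*X t ≤ |2*α*X t| := le_abs_self _
            _ = 2* |α| * |X t| := by rw [abs_mul, abs_mul]; norm_num
            _ ≤ 2* |α| *(9/2*(r*η)) := by
                apply mul_le_mul_of_nonneg_left (hXb t) (by positivity)
            _ = 9* |α| *(r*η) := by ring
      _ = Real.exp (9* |α| *(r*η)) := by
          rw [integral_const]; simp [Measure.real, nu_univ]
  · -- refined bound
    intro h9
    set B : ℝ := 9* |α| *(r*η) with hBdef
    have hB0 : 0 ≤ B := by positivity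
    have hB1 : B ≤ 1 := by
      calc B = 9* |α| *r*η := by rw [hBdef]; ring
        _ ≤ 9* |α| *r*1 := by
            apply mul_le_mul_of_nonneg_left hη1 (by positivity)
        _ ≤ 1 := by rw [mul_one]; exact h9
    have hpoint : ∀ t, Real.exp (2*α*X t)
        ≤ 1 + 2*α*X t + 2*α^2*Real.exp B*(X t)^2 := by
      intro t
      have hq := exp_quad (2*α*X t)
      have hub : |2*α*X t| ≤ B := by
        calc |2*α*X t| = 2* |α| * |X t| := by rw [abs_mul, abs_mul]; norm_num
          _ ≤ 2* |α| *(9/2*(r*η)) := mul_le_mul_of_nonneg_left (hXb t) (by positivity)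
          _ = B := by rw [hBdef]; ring
      have hexpmono : Real.exp |2*α*X t| ≤ Real.exp B := Real.exp_le_exp.mpr hub
      have hsq : (0:ℝ) ≤ (2*α*X t)^2 / 2 := by positivity
      calc Real.exp (2*α*X t) ≤ 1 + 2*α*X t + (2*α*X t)^2/2 * Real.exp |2*α*X t| := hq
        _ ≤ 1 + 2*α*X t + (2*α*X t)^2/2 * Real.exp B := by
            have := mul_le_mul_of_nonneg_left hexpmono hsq
            linarith
        _ = 1 + 2*α*X t + 2*α^2*Real.exp B*(X t)^2 := by ring
    have intXc : Integrable (fun t => 2*α*X t) (volume.restrict (Set.Ioc (0:ℝ) 1)) :=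
      hXint.const_mul (2*α)
    have intX2c : Integrable (fun t => 2*α^2*Real.exp B*(X t)^2)
        (volume.restrict (Set.Ioc (0:ℝ) 1)) := hX2int.const_mul _
    have intA : Integrable (fun t => 1 + 2*α*X t) (volume.restrict (Set.Ioc (0:ℝ) 1)) :=
      (integrable_const 1).add intXc
    have hint2 : Integrable (fun t => 1 + 2*α*X t + 2*α^2*Real.exp B*(X t)^2)
        (volume.restrict (Set.Ioc (0:ℝ) 1)) := intA.add intX2c
    have hIle : (∫ t in Set.Ioc (0:ℝ) 1, Real.exp (2*α*X t))
        ≤ 1 + 2*α^2*Real.exp B*(η^2*r^2/(2*(1-r^2))) := by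
      calc (∫ t in Set.Ioc (0:ℝ) 1, Real.exp (2*α*X t))
          ≤ ∫ t in Set.Ioc (0:ℝ) 1, (1 + 2*α*X t + 2*α^2*Real.exp B*(X t)^2) := by
            apply integral_mono hexpint hint2
            intro t
            exact hpoint t
        _ = (∫ _t in Set.Ioc (0:ℝ) 1, (1:ℝ))
            + (∫ t in Set.Ioc (0:ℝ) 1, 2*α*X t)
            + ∫ t in Set.Ioc (0:ℝ) 1, 2*α^2*Real.exp B*(X t)^2 := by
            rw [integral_add intA intX2c, integral_add (integrable_const 1) intXc]
        _ ≤ 1 + 2*α^2*Real.exp B*(η^2*r^2/(2*(1-r^2))) := by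
            have e1 : (∫ _t in Set.Ioc (0:ℝ) 1, (1:ℝ)) = 1 := by
              rw [integral_const]; simp [Measure.real, nu_univ]
            have e2 : (∫ t in Set.Ioc (0:ℝ) 1, 2*α*X t) = 0 := by
              rw [integral_const_mul, hmom.1, mul_zero]
            have e3 : (∫ t in Set.Ioc (0:ℝ) 1, 2*α^2*Real.exp B*(X t)^2)
                ≤ 2*α^2*Real.exp B*(η^2*r^2/(2*(1-r^2))) := by
              rw [integral_const_mul]
              exact mul_le_mul_of_nonneg_left hmom.2 (by positivity)
            rw [e1, e2]
            linarith
    -- algebraic estimate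
    set a : ℝ := |α| with hadef
    have ha0 : 0 ≤ a := abs_nonneg α
    have haa : α^2 = a^2 := (sq_abs α).symm
    have hexpB : Real.exp B ≤ 1 + 27*(a*r) := by
      calc Real.exp B ≤ 1 + 3*B := exp_le_one_add_three_mul hB0 hB1
        _ = 1 + 27*(a*r)*η := by rw [hBdef, hadef]; ring
        _ ≤ 1 + 27*(a*r) := by
            nlinarith [mul_nonneg (mul_nonneg ha0 hr0) (by linarith : (0:ℝ) ≤ 1 - η)]
    have hfrac : (1:ℝ)/(1-r^2) ≤ 1 + (81/32)*r^2 := by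
      rw [div_le_iff₀ (by linarith)]
      nlinarith
    have hVle : η^2*r^2/(2*(1-r^2)) ≤ (η^2*r^2/2)*(1+(81/32)*r^2) := by
      have : η^2*r^2/(2*(1-r^2)) = (η^2*r^2/2)*(1/(1-r^2)) := by
        field_simp
      rw [this]
      exact mul_le_mul_of_nonneg_left hfrac (by positivity)
    have hstep1 : (1+27*(a*r))*(1+(81/32)*r^2) ≤ 1 + 3*r^2 + 69*(a*r) := by
      nlinarith [mul_nonneg ha0 hr0, mul_nonneg (mul_nonneg ha0 hr0) (by linarith : (0:ℝ) ≤ 49/81 - r^2)]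
    have hstep2 : a^2*η^2*r^2*(1 + 3*r^2 + 69*(a*r)) ≤ a^2*η^2*r^2 + 3*a^2*r^4 + 99*a^3*r^3 := by
      have hη2 : η^2 ≤ 1 := by nlinarith
      nlinarith [mul_nonneg (mul_nonneg (mul_nonneg ha0 ha0) (pow_nonneg hr0 4)) (by linarith : (0:ℝ) ≤ 1 - η^2),
        mul_nonneg (mul_nonneg (mul_nonneg (mul_nonneg ha0 ha0) ha0) (pow_nonneg hr0 3)) (by linarith : (0:ℝ) ≤ 1 - η^2),
        mul_nonneg (mul_nonneg (mul_nonneg ha0 ha0) ha0) (pow_nonneg hr0 3)]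
    have hmain : 2*α^2*Real.exp B*(η^2*r^2/(2*(1-r^2)))
        ≤ α^2*η^2*r^2 + 3*α^2*r^4 + 99* |α|^3*r^3 := by
      have hEB0 : 0 ≤ Real.exp B := (Real.exp_pos B).le
      have hV0 : 0 ≤ η^2*r^2/(2*(1-r^2)) := by positivity
      calc 2*α^2*Real.exp B*(η^2*r^2/(2*(1-r^2)))
          ≤ 2*a^2*(1+27*(a*r))*(η^2*r^2/(2*(1-r^2))) := by
            rw [haa]
            apply mul_le_mul_of_nonneg_right _ hV0
            apply mul_le_mul_of_nonneg_left hexpB (by positivity)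
        _ ≤ 2*a^2*(1+27*(a*r))*((η^2*r^2/2)*(1+(81/32)*r^2)) := by
            apply mul_le_mul_of_nonneg_left hVle
            positivity
        _ = a^2*η^2*r^2*((1+27*(a*r))*(1+(81/32)*r^2)) := by ring
        _ ≤ a^2*η^2*r^2*(1 + 3*r^2 + 69*(a*r)) := by
            apply mul_le_mul_of_nonneg_left hstep1 (by positivity)
        _ ≤ a^2*η^2*r^2 + 3*a^2*r^4 + 99*a^3*r^3 := hstep2
        _ = α^2*η^2*r^2 + 3*α^2*r^4 + 99* |α|^3*r^3 := by rw [haa, hadef]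
    calc (∫ t in Set.Ioc (0:ℝ) 1, Real.exp (2*α*X t))
        ≤ 1 + 2*α^2*Real.exp B*(η^2*r^2/(2*(1-r^2))) := hIle
      _ ≤ 1 + (α^2*η^2*r^2 + 3*α^2*r^4 + 99* |α|^3*r^3) := by linarith
      _ ≤ Real.exp (α^2*η^2*r^2 + 3*α^2*r^4 + 99* |α|^3*r^3) := by
          linarith [Real.add_one_le_exp (α^2*η^2*r^2 + 3*α^2*r^4 + 99* |α|^3*r^3)]



lemma re_neg_s (β u : ℝ) : (-(((β/2:ℝ):ℂ) + (u:ℂ)*Complex.I)).re = -(β/2) := by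
  simp

lemma norm_cpow_half {p : ℕ} (hp : 2 ≤ p) (β u : ℝ) :
    ‖(p:ℂ) ^ (-(((β/2:ℝ):ℂ) + (u:ℂ)*Complex.I))‖ = (p:ℝ) ^ (-(β/2) : ℝ) := by
  have hp0 : (0:ℝ) < p := by positivity
  rw [show (p:ℂ) = (((p:ℝ)):ℂ) by push_cast; rfl]
  rw [Complex.norm_cpow_eq_rpow_re_of_pos hp0, re_neg_s]

lemma cpow_rep {p : ℕ} (hp : 2 ≤ p) (β u : ℝ) :
    (p:ℂ) ^ (-(((β/2:ℝ):ℂ) + (u:ℂ)*Complex.I))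
      = (((p:ℝ) ^ (-(β/2) : ℝ) : ℝ) : ℂ)
        * Complex.exp (((-(u * Real.log p) : ℝ) : ℂ) * Complex.I) := by
  have hp0 : (0:ℝ) < p := by positivity
  have hpc : (p:ℂ) ≠ 0 := by exact_mod_cast (by positivity : (p:ℝ) ≠ 0)
  rw [Complex.cpow_def_of_ne_zero hpc]
  have hlog : Complex.log (p:ℂ) = ((Real.log p : ℝ) : ℂ) := by
    rw [show (p:ℂ) = (((p:ℝ)):ℂ) by push_cast; rfl, ← Complex.ofReal_log hp0.le]
  rw [hlog]
  rw [show ((Real.log p : ℝ) : ℂ) * (-(((β/2:ℝ):ℂ) + (u:ℂ)*Complex.I))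
      = ((-(β/2 * Real.log p) : ℝ) : ℂ) + ((-(u * Real.log p) : ℝ) : ℂ) * Complex.I by
    push_cast; ring]
  rw [Complex.exp_add]
  congr 1
  rw [← Complex.ofReal_exp]
  congr 1
  rw [Real.rpow_def_of_pos hp0]
  congr 1
  ring

lemma cpow_diff_bound {p : ℕ} (hp : 2 ≤ p) (β t t' : ℝ) :
    ‖(p:ℂ) ^ (-(((β/2:ℝ):ℂ) + (t:ℂ)*Complex.I))
      - (p:ℂ) ^ (-(((β/2:ℝ):ℂ) + (t':ℂ)*Complex.I))‖
      ≤ (p:ℝ) ^ (-(β/2) : ℝ) * (|t - t'| * Real.log p) := by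
  have hp1 : (1:ℝ) ≤ p := by exact_mod_cast Nat.one_le_of_lt hp
  have hL : 0 ≤ Real.log p := Real.log_nonneg hp1
  rw [cpow_rep hp β t, cpow_rep hp β t', ← mul_sub, norm_mul]
  rw [Complex.norm_real, Real.norm_eq_abs, abs_of_nonneg (by positivity)]
  apply mul_le_mul_of_nonneg_left _ (by positivity)
  calc ‖Complex.exp (((-(t * Real.log p) : ℝ) : ℂ) * Complex.I)
        - Complex.exp (((-(t' * Real.log p) : ℝ) : ℂ) * Complex.I)‖
      ≤ |(-(t * Real.log p)) - (-(t' * Real.log p))| := norm_exp_I_sub_exp_I _ _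
    _ = |t - t'| * Real.log p := by
        rw [show (-(t * Real.log p)) - (-(t' * Real.log p)) = -((t - t') * Real.log p) by ring]
        rw [abs_neg, abs_mul, abs_of_nonneg hL]

lemma two_rpow_ge : ((9:ℝ)/7) ≤ (2:ℝ) ^ ((3:ℝ)/8) := by
  have h87 : ((9:ℝ)/7) ^ (8:ℕ) ≤ (2:ℝ) ^ (3:ℕ) := by norm_num
  have h1 : ((9:ℝ)/7) = (((9:ℝ)/7) ^ ((8:ℕ):ℝ)) ^ ((1:ℝ)/8) := by
    rw [← Real.rpow_mul (by norm_num)]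
    norm_num
  rw [h1]
  have h2 : (2:ℝ) ^ ((3:ℝ)/8) = ((2:ℝ) ^ ((3:ℕ):ℝ)) ^ ((1:ℝ)/8) := by
    rw [← Real.rpow_mul (by norm_num)]
    norm_num
  rw [h2]
  apply Real.rpow_le_rpow (by positivity) _ (by norm_num)
  rw [Real.rpow_natCast, Real.rpow_natCast]
  exact h87

lemma r_le_79 {p : ℕ} (hp : 2 ≤ p) {β : ℝ} (hβ : 3/4 ≤ β) :
    (p:ℝ) ^ (-(β/2) : ℝ) ≤ 7/9 := by
  have hp2 : (2:ℝ) ≤ (p:ℝ) := by exact_mod_cast hp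
  have h1 : (p:ℝ) ^ (-(β/2) : ℝ) ≤ (2:ℝ) ^ (-(β/2) : ℝ) := by
    rw [Real.rpow_neg (by positivity), Real.rpow_neg (by norm_num)]
    apply inv_anti₀ (by positivity)
    exact Real.rpow_le_rpow (by norm_num) hp2 (by linarith)
  have h2 : (2:ℝ) ^ (-(β/2) : ℝ) ≤ (2:ℝ) ^ (-(3/8) : ℝ) :=
    Real.rpow_le_rpow_of_exponent_le (by norm_num) (by linarith)
  have h3 : (2:ℝ) ^ (-(3/8) : ℝ) ≤ 7/9 := by
    rw [Real.rpow_neg (by norm_num)]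
    rw [show (3:ℝ)/8 = ((3:ℝ)/8) from rfl]
    have h4 := two_rpow_ge
    have h5 : (0:ℝ) < (2:ℝ) ^ ((3:ℝ)/8) := by positivity
    rw [inv_le_comm₀ h5 (by norm_num)]
    have h6 : ((7:ℝ)/9)⁻¹ = 9/7 := by norm_num
    rw [h6]
    exact h4

  calc (p:ℝ) ^ (-(β/2) : ℝ) ≤ (2:ℝ) ^ (-(β/2) : ℝ) := h1
    _ ≤ (2:ℝ) ^ (-(3/8) : ℝ) := h2
    _ ≤ 7/9 := h3

lemma abs_rpow_le_one_add {α : ℝ} {c : ℝ} (h0 : 0 ≤ c) (h1 : c ≤ 11/3) :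
    |α| ^ (c:ℝ) ≤ 1 + |α| ^ ((11:ℝ)/3) := by
  rcases le_or_gt |α| 1 with h | h
  · have : |α| ^ (c:ℝ) ≤ 1 := Real.rpow_le_one (abs_nonneg α) h h0
    have h2 : (0:ℝ) ≤ |α| ^ ((11:ℝ)/3) := Real.rpow_nonneg (abs_nonneg α) _
    linarith
  · have : |α| ^ (c:ℝ) ≤ |α| ^ ((11:ℝ)/3) :=
      Real.rpow_le_rpow_of_exponent_le h.le h1
    linarith



lemma uniformCircle_eq :
    uniformCircle = Measure.map circ ((volume : Measure ℝ).restrict (Set.Ioc 0 1)) := rfl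

lemma uniformCircle_sphere : uniformCircle (Metric.sphere (0:ℂ) 1) = 1 := by
  rw [uniformCircle_eq, Measure.map_apply measurable_circ ((Metric.isClosed_sphere).measurableSet)]
  have : circ ⁻¹' (Metric.sphere (0:ℂ) 1) = Set.univ := by
    ext t
    simp only [Set.mem_preimage, mem_sphere_zero_iff_norm, Set.mem_univ, iff_true]
    exact norm_circ t
  rw [this, nu_univ]


end St15Aux

open St15Aux

theorem statement15 {Ω : Type} [MeasurableSpace Ω] (μ : Measure Ω) (f : ℕ → Ω → ℂ)
    (hf : IsSteinhaus μ f) :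
    ∃ C : ℝ, ∀ y β α δ t t' : ℝ, 2 ≤ y → 3 / 4 ≤ β → 1 ≤ δ →
      |t - t'| ≤ 1 / (δ * Real.log y) →
      (∫ ω, ‖eulerF f y (((β / 2 : ℝ) : ℂ) + (t : ℂ) * Complex.I) ω /
          eulerF f y (((β / 2 : ℝ) : ℂ) + (t' : ℂ) * Complex.I) ω‖ ^ (2 * α) ∂μ) ≤
        Real.exp (C * (1 + |α| ^ ((11 : ℝ) / 3))) * zetaSmooth β y ^ (α ^ 2 / δ ^ 2) := by
  classical
  haveI := hf.isProb
  refine ⟨100000, ?_⟩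
  intro y β α δ t t' hy hβ hδ htt
  set P := primesUpTo y with hP
  set s : ℂ := ((β / 2 : ℝ) : ℂ) + (t : ℂ) * Complex.I with hs
  set s' : ℂ := ((β / 2 : ℝ) : ℂ) + (t' : ℂ) * Complex.I with hs'
  have hy1 : (1:ℝ) < y := by linarith
  have hlogy : 0 < Real.log y := Real.log_pos hy1
  have hδ0 : (0:ℝ) < δ := by linarith
  have hprime : ∀ p ∈ P, p.Prime := fun p hp => ((Finset.mem_filter.mp hp).2).1
  have hple : ∀ p ∈ P, (p:ℝ) ≤ y := fun p hp => ((Finset.mem_filter.mp hp).2).2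
  have hp2 : ∀ p ∈ P, 2 ≤ p := fun p hp => (hprime p hp).two_le
  -- per-prime data
  set rr : ℕ → ℝ := fun p => (p:ℝ) ^ (-(β/2) : ℝ) with hrr
  set ηη : ℕ → ℝ := fun p => |t - t'| * Real.log p with hηη
  set g : ℕ → ℂ → ℝ := fun p z =>
    Real.log ‖1 - z * (p:ℂ) ^ (-s')‖ - Real.log ‖1 - z * (p:ℂ) ^ (-s)‖ with hg
  have hgmeas : ∀ p, Measurable (g p) := by
    intro p
    apply Measurable.sub <;>
      exact Real.measurable_log.comp ((measurable_const.sub (measurable_id.mul_const _)).norm)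
  set Xv : {q : ℕ // q.Prime} → Ω → ℝ := fun q ω => g q.1 (f q.1 ω) with hXv
  have hXmeas : ∀ q, Measurable (Xv q) := fun q => (hgmeas q.1).comp (hf.meas q.1)
  have hXindep : iIndepFun Xv μ :=
    hf.indep.comp (fun q => g q.1) (fun q => hgmeas q.1)
  set emb : {x // x ∈ P} ↪ {q : ℕ // q.Prime} :=
    ⟨fun x => ⟨x.1, hprime x.1 x.2⟩, by
      intro a b hab
      have h := congr_arg (fun z : {q : ℕ // q.Prime} => z.1) hab
      exact Subtype.ext h⟩ with hemb
  set Q : Finset {q : ℕ // q.Prime} := P.attach.map emb with hQ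
  have hQmem : ∀ q ∈ Q, q.1 ∈ P := by
    intro q hq
    rw [hQ, Finset.mem_map] at hq
    obtain ⟨x, _, hx⟩ := hq
    rw [← hx]
    exact x.2
  have hsumQ : ∀ ω, (∑ q ∈ Q, Xv q ω) = ∑ p ∈ P, g p (f p ω) := by
    intro ω
    rw [hQ, Finset.sum_map]
    exact Finset.sum_attach P (fun p => g p (f p ω))
  -- norms of the cpow values
  have hwnorm : ∀ p ∈ P, ‖(p:ℂ) ^ (-s)‖ = rr p := by
    intro p hp
    rw [hs, hrr]
    exact norm_cpow_half (hp2 p hp) β t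
  have hwnorm' : ∀ p ∈ P, ‖(p:ℂ) ^ (-s')‖ = rr p := by
    intro p hp
    rw [hs', hrr]
    exact norm_cpow_half (hp2 p hp) β t'
  have hr79 : ∀ p ∈ P, rr p ≤ 7/9 := fun p hp => r_le_79 (hp2 p hp) hβ
  have hr0 : ∀ p ∈ P, 0 ≤ rr p := fun p hp => Real.rpow_nonneg (by positivity) _
  -- a.e. statement
  have hcirc_ae : ∀ p ∈ P, ∀ᵐ ω ∂μ, ‖f p ω‖ = 1 := by
    intro p hp
    have hA : MeasurableSet ((f p) ⁻¹' (Metric.sphere (0:ℂ) 1)) :=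
      (hf.meas p) (Metric.isClosed_sphere).measurableSet
    have hmp : μ ((f p) ⁻¹' (Metric.sphere (0:ℂ) 1)) = 1 := by
      rw [← Measure.map_apply (hf.meas p) (Metric.isClosed_sphere).measurableSet,
        hf.uniform p (hprime p hp), uniformCircle_sphere]
    have hcompl : μ ((f p) ⁻¹' (Metric.sphere (0:ℂ) 1))ᶜ = 0 := by
      rw [measure_compl hA (measure_ne_top μ _), hmp, measure_univ]
      simp
    rw [MeasureTheory.ae_iff]
    convert hcompl using 2
    ext ω
    simp [mem_sphere_zero_iff_norm]
  have hAE : ∀ᵐ ω ∂μ, ∀ p ∈ P, ‖f p ω‖ = 1 := by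
    rw [Filter.eventually_all_finset]
    exact hcirc_ae
  -- rewrite the integrand a.e.
  have hintegrand : ∀ᵐ ω ∂μ, ‖eulerF f y s ω / eulerF f y s' ω‖ ^ (2*α)
      = Real.exp ((2*α) * ∑ q ∈ Q, Xv q ω) := by
    filter_upwards [hAE] with ω hω
    have hfactor : ∀ p ∈ P,
        ‖(1 - f p ω * (p:ℂ) ^ (-s))⁻¹ / (1 - f p ω * (p:ℂ) ^ (-s'))⁻¹‖ ^ (2*α)
          = Real.exp ((2*α) * g p (f p ω)) := by
      intro p hp
      have hz1 : ‖f p ω * (p:ℂ) ^ (-s)‖ = rr p := by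
        rw [norm_mul, hω p hp, one_mul, hwnorm p hp]
      have hz1' : ‖f p ω * (p:ℂ) ^ (-s')‖ = rr p := by
        rw [norm_mul, hω p hp, one_mul, hwnorm' p hp]
      have hlt : rr p < 1 := lt_of_le_of_lt (hr79 p hp) (by norm_num)
      have hA : 0 < ‖1 - f p ω * (p:ℂ) ^ (-s)‖ := by
        have h1 : 1 - rr p ≤ ‖1 - f p ω * (p:ℂ) ^ (-s)‖ := by
          calc 1 - rr p = ‖(1:ℂ)‖ - ‖f p ω * (p:ℂ) ^ (-s)‖ := by rw [norm_one, hz1]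
            _ ≤ _ := norm_sub_norm_le _ _
        linarith
      have hA' : 0 < ‖1 - f p ω * (p:ℂ) ^ (-s')‖ := by
        have h1 : 1 - rr p ≤ ‖1 - f p ω * (p:ℂ) ^ (-s')‖ := by
          calc 1 - rr p = ‖(1:ℂ)‖ - ‖f p ω * (p:ℂ) ^ (-s')‖ := by rw [norm_one, hz1']
            _ ≤ _ := norm_sub_norm_le _ _
        linarith
      have hrw : (1 - f p ω * (p:ℂ) ^ (-s))⁻¹ / (1 - f p ω * (p:ℂ) ^ (-s'))⁻¹
          = (1 - f p ω * (p:ℂ) ^ (-s')) / (1 - f p ω * (p:ℂ) ^ (-s)) := by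
        rw [div_eq_mul_inv, inv_inv, mul_comm, ← div_eq_mul_inv]
      rw [hrw, norm_div]
      rw [Real.rpow_def_of_pos (by positivity)]
      rw [Real.log_div (by positivity) (by positivity)]
      rw [hg]
      ring_nf
    calc ‖eulerF f y s ω / eulerF f y s' ω‖ ^ (2*α)
        = ‖∏ p ∈ P, ((1 - f p ω * (p:ℂ) ^ (-s))⁻¹ / (1 - f p ω * (p:ℂ) ^ (-s'))⁻¹)‖ ^ (2*α) := by
          rw [eulerF, eulerF, ← Finset.prod_div_distrib, hP]
      _ = (∏ p ∈ P, ‖(1 - f p ω * (p:ℂ) ^ (-s))⁻¹ / (1 - f p ω * (p:ℂ) ^ (-s'))⁻¹‖) ^ (2*α) := by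
          rw [norm_prod]
      _ = ∏ p ∈ P, ‖(1 - f p ω * (p:ℂ) ^ (-s))⁻¹ / (1 - f p ω * (p:ℂ) ^ (-s'))⁻¹‖ ^ (2*α) :=
          (Real.finset_prod_rpow P _ (fun p _ => norm_nonneg _) (2*α)).symm
      _ = ∏ p ∈ P, Real.exp ((2*α) * g p (f p ω)) := Finset.prod_congr rfl hfactor
      _ = Real.exp (∑ p ∈ P, (2*α) * g p (f p ω)) := (Real.exp_sum P _).symm
      _ = Real.exp ((2*α) * ∑ q ∈ Q, Xv q ω) := by rw [hsumQ, ← Finset.mul_sum]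
  rw [integral_congr_ae hintegrand]
  have hmgf : (∫ ω, Real.exp ((2*α) * ∑ q ∈ Q, Xv q ω) ∂μ)
      = ∏ q ∈ Q, mgf (Xv q) μ (2*α) := by
    rw [← iIndepFun.mgf_sum hXindep hXmeas Q]
    unfold mgf
    congr 1
    funext ω
    simp only [Finset.sum_apply]
  rw [hmgf]
  -- the per-prime slack and zeta factors
  set wb : ℕ → ℝ := fun p => if 9 * |α| * rr p ≤ 1
      then 3*α^2*(p:ℝ) ^ (-(3/2):ℝ) + 99 * |α| ^3*(p:ℝ) ^ (-(9/8):ℝ)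
      else 9 * |α| with hwb
  set zb : ℕ → ℝ := fun p => (1 - (p:ℝ) ^ (-β)) ^ (-(α^2/δ^2)) with hzb
  have hzb1 : ∀ p ∈ P, 0 < 1 - (p:ℝ) ^ (-β) := by
    intro p hp
    have hp1 : (1:ℝ) < p := by
      have := hp2 p hp; exact_mod_cast Nat.lt_of_lt_of_le one_lt_two this
    have : (p:ℝ) ^ (-β) < 1 :=
      Real.rpow_lt_one_of_one_lt_of_neg hp1 (by linarith)
    linarith
  -- per-prime bound
  have hperprime : ∀ q ∈ Q, mgf (Xv q) μ (2*α) ≤ Real.exp (wb q.1) * zb q.1 := by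
    intro q hq
    set p := q.1 with hpq
    have hpP : p ∈ P := hQmem q hq
    have hp2' : 2 ≤ p := hp2 p hpP
    have hp0 : (0:ℝ) < p := by positivity
    have hp1 : (1:ℝ) ≤ p := by exact_mod_cast Nat.one_le_of_lt hp2'
    -- transfer to the circle integral
    have hmeasg : Measurable (fun z : ℂ => Real.exp (2*α * g p z)) :=
      Real.measurable_exp.comp ((hgmeas p).const_mul (2*α))
    have htrans : mgf (Xv q) μ (2*α)
        = ∫ x in Set.Ioc (0:ℝ) 1, Real.exp (2*α * g p (circ x)) := by
      have h1 : mgf (Xv q) μ (2*α) = ∫ ω, Real.exp (2*α * g p (f p ω)) ∂μ := rfl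
      have h2 : ∫ ω, Real.exp (2*α * g p (f p ω)) ∂μ
          = ∫ z, Real.exp (2*α * g p z) ∂(μ.map (f p)) :=
        (integral_map (hf.meas p).aemeasurable hmeasg.aestronglyMeasurable).symm
      have h3 : μ.map (f p) = uniformCircle := hf.uniform p (hprime p hpP)
      have h4 : ∫ z, Real.exp (2*α * g p z) ∂uniformCircle
          = ∫ x in Set.Ioc (0:ℝ) 1, Real.exp (2*α * g p (circ x)) := by
        rw [uniformCircle_eq]
        exact integral_map measurable_circ.aemeasurable hmeasg.aestronglyMeasurable
      rw [h1, h2, h3, h4]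
    -- verify prime_core hypotheses
    have hw : ‖(p:ℂ) ^ (-s)‖ = rr p := hwnorm p hpP
    have hw' : ‖(p:ℂ) ^ (-s')‖ = rr p := hwnorm' p hpP
    have hd : ‖(p:ℂ) ^ (-s) - (p:ℂ) ^ (-s')‖ ≤ rr p * ηη p := by
      rw [hs, hs', hrr, hηη]
      exact cpow_diff_bound hp2' β t t'
    have hη0 : 0 ≤ ηη p := by
      rw [hηη]
      exact mul_nonneg (abs_nonneg _) (Real.log_nonneg hp1)
    have hηδ : ηη p ≤ 1/δ := by
      rw [hηη]
      have hlp : Real.log p ≤ Real.log y := Real.log_le_log hp0 (hple p hpP)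
      have hlp0 : 0 ≤ Real.log p := Real.log_nonneg hp1
      calc |t - t'| * Real.log p ≤ (1/(δ * Real.log y)) * Real.log p :=
            mul_le_mul_of_nonneg_right htt hlp0
        _ ≤ (1/(δ * Real.log y)) * Real.log y := by
            apply mul_le_mul_of_nonneg_left hlp (by positivity)
        _ = 1/δ := by field_simp
    have hη1 : ηη p ≤ 1 := by
      calc ηη p ≤ 1/δ := hηδ
        _ ≤ 1 := by rw [div_le_one hδ0]; exact hδ
    have hcore := prime_core α hw hw' (hr79 p hpP) hd hη0 hη1
    -- the integrand of prime_core matches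
    have hgcirc : (fun x => Real.exp (2*α * g p (circ x)))
        = fun x => Real.exp (2*α*(Real.log ‖1 - circ x * (p:ℂ) ^ (-s')‖
            - Real.log ‖1 - circ x * (p:ℂ) ^ (-s)‖)) := by
      funext x
      rw [hg]
    have hrpβ : rr p ^ 2 = (p:ℝ) ^ (-β) := by
      rw [hrr]
      rw [sq, ← Real.rpow_add hp0]
      congr 1
      ring
    have hzbp : zb p = Real.exp (Real.log (1 - (p:ℝ) ^ (-β)) * (-(α^2/δ^2))) := by
      show (1 - (p:ℝ) ^ (-β)) ^ (-(α^2/δ^2)) = _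
      rw [Real.rpow_def_of_pos (hzb1 p hpP)]
    by_cases hgood : 9 * |α| * rr p ≤ 1
    · -- good prime
      have hbound := hcore.2 hgood
      rw [htrans, hgcirc]
      have hwbp : wb p = 3*α^2*(p:ℝ) ^ (-(3/2):ℝ) + 99 * |α| ^3*(p:ℝ) ^ (-(9/8):ℝ) := by
        show (if 9 * |α| * rr p ≤ 1
          then 3*α^2*(p:ℝ) ^ (-(3/2):ℝ) + 99 * |α| ^3*(p:ℝ) ^ (-(9/8):ℝ)
          else 9 * |α|) = _
        exact if_pos hgood
      -- budget inequality
      have hlog1 : (p:ℝ) ^ (-β) ≤ -Real.log (1 - (p:ℝ) ^ (-β)) := by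
        have := Real.log_le_sub_one_of_pos (hzb1 p hpP)
        linarith
      have hbudget : α^2*(ηη p)^2*(rr p)^2
          ≤ Real.log (1 - (p:ℝ) ^ (-β)) * (-(α^2/δ^2)) := by
        have hη2 : (ηη p)^2 ≤ 1/δ^2 := by
          have h1 : (ηη p)^2 ≤ (1/δ)^2 := pow_le_pow_left₀ hη0 hηδ 2
          calc (ηη p)^2 ≤ (1/δ)^2 := h1
            _ = 1/δ^2 := by ring
        calc α^2*(ηη p)^2*(rr p)^2 ≤ α^2*(1/δ^2)*(rr p)^2 := by
              apply mul_le_mul_of_nonneg_right _ (by positivity)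
              exact mul_le_mul_of_nonneg_left hη2 (by positivity)
          _ = (α^2/δ^2) * ((rr p)^2) := by ring
          _ ≤ (α^2/δ^2) * (-Real.log (1 - (p:ℝ) ^ (-β))) := by
              apply mul_le_mul_of_nonneg_left _ (by positivity)
              rw [hrpβ]
              exact hlog1
          _ = Real.log (1 - (p:ℝ) ^ (-β)) * (-(α^2/δ^2)) := by ring
      have hr4 : (rr p)^4 ≤ (p:ℝ) ^ (-(3/2):ℝ) := by
        have h1 : (rr p)^4 = (p:ℝ) ^ ((-(β/2)) * (4:ℕ)) := by
          rw [hrr, Real.rpow_mul hp0.le, Real.rpow_natCast]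
        rw [h1]
        apply Real.rpow_le_rpow_of_exponent_le hp1
        push_cast
        linarith
      have hr3 : (rr p)^3 ≤ (p:ℝ) ^ (-(9/8):ℝ) := by
        have h1 : (rr p)^3 = (p:ℝ) ^ ((-(β/2)) * (3:ℕ)) := by
          rw [hrr, Real.rpow_mul hp0.le, Real.rpow_natCast]
        rw [h1]
        apply Real.rpow_le_rpow_of_exponent_le hp1
        push_cast
        linarith
      calc (∫ x in Set.Ioc (0:ℝ) 1, Real.exp (2*α*(Real.log ‖1 - circ x * (p:ℂ) ^ (-s')‖
            - Real.log ‖1 - circ x * (p:ℂ) ^ (-s)‖)))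
          ≤ Real.exp (α^2*(ηη p)^2*(rr p)^2 + 3*α^2*(rr p)^4 + 99 * |α| ^3*(rr p)^3) := hbound
        _ ≤ Real.exp (wb p) * zb p := by
            rw [hwbp, hzbp, ← Real.exp_add]
            rw [Real.exp_le_exp]
            have t1 : 3*α^2*(rr p)^4 ≤ 3*α^2*(p:ℝ) ^ (-(3/2):ℝ) :=
              mul_le_mul_of_nonneg_left hr4 (by positivity)
            have t2 : 99 * |α| ^3*(rr p)^3 ≤ 99 * |α| ^3*(p:ℝ) ^ (-(9/8):ℝ) :=
              mul_le_mul_of_nonneg_left hr3 (by positivity)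
            linarith [hbudget]
    · -- bad prime
      have hbound := hcore.1
      rw [htrans, hgcirc]
      have hwbp : wb p = 9 * |α| := by
        show (if 9 * |α| * rr p ≤ 1
          then 3*α^2*(p:ℝ) ^ (-(3/2):ℝ) + 99 * |α| ^3*(p:ℝ) ^ (-(9/8):ℝ)
          else 9 * |α|) = _
        exact if_neg hgood
      have hrle1 : rr p ≤ 1 := by
        rw [hrr]
        exact Real.rpow_le_one_of_one_le_of_nonpos hp1 (by linarith)
      have hzb1' : (1:ℝ) ≤ zb p := by
        show (1:ℝ) ≤ (1 - (p:ℝ) ^ (-β)) ^ (-(α^2/δ^2))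
        apply Real.one_le_rpow_of_pos_of_le_one_of_nonpos (hzb1 p hpP)
        · linarith [Real.rpow_nonneg (le_of_lt hp0) (-β)]
        · have : (0:ℝ) ≤ α^2/δ^2 := by positivity
          linarith
      calc (∫ x in Set.Ioc (0:ℝ) 1, Real.exp (2*α*(Real.log ‖1 - circ x * (p:ℂ) ^ (-s')‖
            - Real.log ‖1 - circ x * (p:ℂ) ^ (-s)‖)))
          ≤ Real.exp (9 * |α| * (rr p * ηη p)) := hbound
        _ ≤ Real.exp (wb p) := by
            rw [hwbp, Real.exp_le_exp]
            have h1 : rr p * ηη p ≤ 1 := by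
              calc rr p * ηη p ≤ 1 * 1 := mul_le_mul hrle1 hη1 hη0 zero_le_one
                _ = 1 := by norm_num
            calc 9 * |α| * (rr p * ηη p) ≤ 9 * |α| * 1 :=
                  mul_le_mul_of_nonneg_left h1 (by positivity)
              _ = 9 * |α| := by ring
        _ ≤ Real.exp (wb p) * zb p := le_mul_of_one_le_right (Real.exp_pos _).le hzb1'
  -- assemble products
  have hprodQ : ∏ q ∈ Q, mgf (Xv q) μ (2*α) ≤ ∏ q ∈ Q, (Real.exp (wb q.1) * zb q.1) :=
    Finset.prod_le_prod (fun q _ => mgf_nonneg) hperprime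
  have hQP : ∏ q ∈ Q, (Real.exp (wb q.1) * zb q.1) = ∏ p ∈ P, (Real.exp (wb p) * zb p) := by
    rw [hQ, Finset.prod_map]
    exact Finset.prod_attach P (fun p => Real.exp (wb p) * zb p)
  have hsplit : ∏ p ∈ P, (Real.exp (wb p) * zb p)
      = Real.exp (∑ p ∈ P, wb p) * ∏ p ∈ P, zb p := by
    rw [Finset.prod_mul_distrib, Real.exp_sum]
  have hzprod : ∏ p ∈ P, zb p = zetaSmooth β y ^ (α^2/δ^2) := by
    have h1 : ∀ p ∈ P, zb p = ((1 - (p:ℝ) ^ (-β))⁻¹) ^ (α^2/δ^2) := by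
      intro p hp
      show (1 - (p:ℝ) ^ (-β)) ^ (-(α^2/δ^2)) = _
      rw [Real.rpow_neg (hzb1 p hp).le, ← Real.inv_rpow (hzb1 p hp).le]
    calc ∏ p ∈ P, zb p = ∏ p ∈ P, ((1 - (p:ℝ) ^ (-β))⁻¹) ^ (α^2/δ^2) :=
          Finset.prod_congr rfl h1
      _ = (∏ p ∈ P, (1 - (p:ℝ) ^ (-β))⁻¹) ^ (α^2/δ^2) :=
          Real.finset_prod_rpow P _ (fun p hp => inv_nonneg.mpr (hzb1 p hp).le) _
      _ = zetaSmooth β y ^ (α^2/δ^2) := rfl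
  -- the sum of slacks
  have hwble : ∀ p ∈ P, wb p ≤ (3*α^2 + 99 * |α| ^3) * (p:ℝ) ^ (-(9/8):ℝ)
      + (if 9 * |α| * rr p ≤ 1 then (0:ℝ) else 9 * |α|) := by
    intro p hp
    have hp1 : (1:ℝ) ≤ p := by
      have := hp2 p hp
      exact_mod_cast Nat.one_le_of_lt this
    by_cases hgood : 9 * |α| * rr p ≤ 1
    · have e1 : wb p = 3*α^2*(p:ℝ) ^ (-(3/2):ℝ) + 99 * |α| ^3*(p:ℝ) ^ (-(9/8):ℝ) := by
        show (if 9 * |α| * rr p ≤ 1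
          then 3*α^2*(p:ℝ) ^ (-(3/2):ℝ) + 99 * |α| ^3*(p:ℝ) ^ (-(9/8):ℝ)
          else 9 * |α|) = _
        exact if_pos hgood
      rw [e1, if_pos hgood]
      have h32 : (p:ℝ) ^ (-(3/2):ℝ) ≤ (p:ℝ) ^ (-(9/8):ℝ) :=
        Real.rpow_le_rpow_of_exponent_le hp1 (by norm_num)
      have h33 : 3*α^2*(p:ℝ) ^ (-(3/2):ℝ) ≤ 3*α^2*(p:ℝ) ^ (-(9/8):ℝ) :=
        mul_le_mul_of_nonneg_left h32 (by positivity)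
      linarith
    · have e1 : wb p = 9 * |α| := by
        show (if 9 * |α| * rr p ≤ 1
          then 3*α^2*(p:ℝ) ^ (-(3/2):ℝ) + 99 * |α| ^3*(p:ℝ) ^ (-(9/8):ℝ)
          else 9 * |α|) = _
        exact if_neg hgood
      rw [e1, if_neg hgood]
      have : (0:ℝ) ≤ (3*α^2 + 99 * |α| ^3) * (p:ℝ) ^ (-(9/8):ℝ) := by positivity
      linarith
  have hsum1 : ∑ p ∈ P, (p:ℝ) ^ (-(9/8):ℝ) ≤ 8 := by
    apply sum_rpow_le P hp2 ⌊y⌋₊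
    intro p hp
    have h1 : p ∈ Finset.range (⌊y⌋₊ + 1) := (Finset.mem_filter.mp hp).1
    have := Finset.mem_range.mp h1
    omega
  have hbadcard : (((P.filter (fun p => ¬ (9 * |α| * rr p ≤ 1))).card : ℝ))
      ≤ (9 * |α|) ^ ((8:ℝ)/3) + 1 := by
    set M := (9 * |α|) ^ ((8:ℝ)/3) with hM
    have hM0 : 0 ≤ M := Real.rpow_nonneg (by positivity) _
    have hsub : P.filter (fun p => ¬ (9 * |α| * rr p ≤ 1)) ⊆ Finset.range ⌈M⌉₊ := by
      intro p hp
      obtain ⟨hpP, hbad⟩ := Finset.mem_filter.mp hp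
      push_neg at hbad
      have hp2' : 2 ≤ p := hp2 p hpP
      have hp0 : (0:ℝ) < p := by positivity
      have hp1 : (1:ℝ) ≤ p := by exact_mod_cast Nat.one_le_of_lt hp2'
      have hrpos : (0:ℝ) < (p:ℝ) ^ ((β/2):ℝ) := by positivity
      have hmulinv : (p:ℝ) ^ (-(β/2):ℝ) * (p:ℝ) ^ ((β/2):ℝ) = 1 := by
        rw [← Real.rpow_add hp0]
        norm_num
      have hlt : (p:ℝ) ^ ((β/2):ℝ) < 9 * |α| := by
        have h2 := mul_lt_mul_of_pos_right hbad hrpos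
        rw [one_mul] at h2
        calc (p:ℝ) ^ ((β/2):ℝ) < 9 * |α| * rr p * (p:ℝ) ^ ((β/2):ℝ) := h2
          _ = 9 * |α| * ((p:ℝ) ^ (-(β/2):ℝ) * (p:ℝ) ^ ((β/2):ℝ)) := by
              rw [hrr]; ring
          _ = 9 * |α| := by rw [hmulinv, mul_one]
      have h1le : (1:ℝ) ≤ (p:ℝ) ^ ((β/2):ℝ) := by
        calc (1:ℝ) = (p:ℝ) ^ (0:ℝ) := (Real.rpow_zero _).symm
          _ ≤ (p:ℝ) ^ ((β/2):ℝ) := Real.rpow_le_rpow_of_exponent_le hp1 (by linarith)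
      have h9α : (1:ℝ) < 9 * |α| := lt_of_le_of_lt h1le hlt
      have hple' : (p:ℝ) < M := by
        have hβ0 : (0:ℝ) < β := by linarith
        have hrw : ((p:ℝ) ^ ((β/2):ℝ)) ^ ((2/β):ℝ) = (p:ℝ) := by
          rw [← Real.rpow_mul hp0.le]
          rw [show (β/2) * (2/β) = 1 by field_simp]
          exact Real.rpow_one _
        have hmono : ((p:ℝ) ^ ((β/2):ℝ)) ^ ((2/β):ℝ) < (9 * |α|) ^ ((2/β):ℝ) :=
          Real.rpow_lt_rpow (by positivity) hlt (by positivity)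
        have hexp : (9 * |α|) ^ ((2/β):ℝ) ≤ (9 * |α|) ^ ((8:ℝ)/3) := by
          apply Real.rpow_le_rpow_of_exponent_le h9α.le
          rw [div_le_div_iff₀ hβ0 (by norm_num)]
          linarith
        rw [hrw] at hmono
        exact lt_of_lt_of_le hmono hexp
      rw [Finset.mem_range]
      exact Nat.lt_ceil.mpr hple'
    calc (((P.filter (fun p => ¬ (9 * |α| * rr p ≤ 1))).card : ℝ))
        ≤ ((Finset.range ⌈M⌉₊).card : ℝ) := by
          exact_mod_cast Finset.card_le_card hsub
      _ = (⌈M⌉₊ : ℝ) := by rw [Finset.card_range]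
      _ ≤ M + 1 := le_of_lt (Nat.ceil_lt_add_one hM0)
  have hsum2 : ∑ p ∈ P, (if 9 * |α| * rr p ≤ 1 then (0:ℝ) else 9 * |α|)
      ≤ 9 * |α| * ((9 * |α|) ^ ((8:ℝ)/3) + 1) := by
    have e1 : ∑ p ∈ P, (if 9 * |α| * rr p ≤ 1 then (0:ℝ) else 9 * |α|)
        = ∑ p ∈ P.filter (fun p => ¬ (9 * |α| * rr p ≤ 1)), (9 * |α|) := by
      rw [Finset.sum_filter]
      apply Finset.sum_congr rfl
      intro p _
      by_cases h : 9 * |α| * rr p ≤ 1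
      · rw [if_pos h, if_neg (by simpa using h)]
      · rw [if_neg h, if_pos h]
    rw [e1, Finset.sum_const, nsmul_eq_mul]
    calc ((P.filter (fun p => ¬ (9 * |α| * rr p ≤ 1))).card : ℝ) * (9 * |α|)
        ≤ ((9 * |α|) ^ ((8:ℝ)/3) + 1) * (9 * |α|) :=
          mul_le_mul_of_nonneg_right hbadcard (by positivity)
      _ = 9 * |α| * ((9 * |α|) ^ ((8:ℝ)/3) + 1) := by ring
  have hwsum : ∑ p ∈ P, wb p ≤ 100000*(1 + |α| ^ ((11:ℝ)/3)) := by
    set Xp := |α| ^ ((11:ℝ)/3) with hXp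
    have hX0 : 0 ≤ Xp := Real.rpow_nonneg (abs_nonneg _) _
    have hs1 : ∑ p ∈ P, wb p
        ≤ (3*α^2 + 99 * |α| ^3) * (∑ p ∈ P, (p:ℝ) ^ (-(9/8):ℝ))
          + ∑ p ∈ P, (if 9 * |α| * rr p ≤ 1 then (0:ℝ) else 9 * |α|) := by
      calc ∑ p ∈ P, wb p
          ≤ ∑ p ∈ P, ((3*α^2 + 99 * |α| ^3) * (p:ℝ) ^ (-(9/8):ℝ)
            + (if 9 * |α| * rr p ≤ 1 then (0:ℝ) else 9 * |α|)) :=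
            Finset.sum_le_sum hwble
        _ = _ := by rw [Finset.sum_add_distrib, ← Finset.mul_sum]
    have hα2 : α^2 ≤ 1 + Xp := by
      have e : α^2 = |α| ^ ((2:ℕ):ℝ) := by rw [Real.rpow_natCast, sq_abs]
      rw [e, hXp]
      exact abs_rpow_le_one_add (by norm_num) (by norm_num)
    have hα3 : |α| ^(3:ℕ) ≤ 1 + Xp := by
      have e : |α|^(3:ℕ) = |α| ^ ((3:ℕ):ℝ) := (Real.rpow_natCast _ _).symm
      rw [e, hXp]
      exact abs_rpow_le_one_add (by norm_num) (by norm_num)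
    have hα1 : |α| ≤ 1 + Xp := by
      have e : |α| = |α| ^ ((1:ℝ)) := (Real.rpow_one _).symm
      rw [e, hXp]
      exact abs_rpow_le_one_add (by norm_num) (by norm_num)
    have h83 : (9 * |α|) ^ ((8:ℝ)/3) = 9 ^ ((8:ℝ)/3) * |α| ^ ((8:ℝ)/3) :=
      Real.mul_rpow (by norm_num) (abs_nonneg _)
    have h9bound : (9:ℝ) ^ ((8:ℝ)/3) ≤ 729 := by
      calc (9:ℝ) ^ ((8:ℝ)/3) ≤ 9 ^ ((3:ℕ):ℝ) :=
            Real.rpow_le_rpow_of_exponent_le (by norm_num) (by push_cast; norm_num)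
        _ = 729 := by rw [Real.rpow_natCast]; norm_num
    have hαprod : |α| * |α| ^ ((8:ℝ)/3) = Xp := by
      rw [hXp, show (11:ℝ)/3 = 1 + 8/3 by norm_num,
        Real.rpow_add' (abs_nonneg α) (by norm_num), Real.rpow_one]
    have hbad : 9 * |α| * ((9 * |α|) ^ ((8:ℝ)/3) + 1) ≤ 6561 * Xp + 9 * |α| := by
      rw [h83]
      have e1 : 9 * |α| * (9 ^ ((8:ℝ)/3) * |α| ^ ((8:ℝ)/3) + 1)
          = 9 * 9 ^ ((8:ℝ)/3) * (|α| * |α| ^ ((8:ℝ)/3)) + 9 * |α| := by ring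
      rw [e1, hαprod]
      have h9a : 9 * (9:ℝ) ^ ((8:ℝ)/3) ≤ 6561 := by linarith
      nlinarith [hX0, Real.rpow_nonneg (by norm_num : (0:ℝ) ≤ 9) ((8:ℝ)/3)]
    have h8sum : (3*α^2 + 99 * |α| ^3) * (∑ p ∈ P, (p:ℝ) ^ (-(9/8):ℝ))
        ≤ (3*α^2 + 99 * |α| ^3) * 8 := by
      apply mul_le_mul_of_nonneg_left hsum1 (by positivity)
    have habs3 : (0:ℝ) ≤ |α| ^ (3:ℕ) := by positivity
    calc ∑ p ∈ P, wb p
        ≤ (3*α^2 + 99 * |α| ^3) * 8 + (9 * |α| * ((9 * |α|) ^ ((8:ℝ)/3) + 1)) := by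
          linarith [hs1, h8sum, hsum2]
      _ ≤ (3*(1+Xp) + 99 * (1+Xp)) * 8 + (6561 * Xp + 9 * (1+Xp)) := by
          nlinarith [hα2, hα3, hα1, hbad, hX0]
      _ ≤ 100000*(1 + Xp) := by nlinarith [hX0]
  -- final combination
  have hzeta0 : (0:ℝ) ≤ zetaSmooth β y ^ (α^2/δ^2) := by
    apply Real.rpow_nonneg
    apply Finset.prod_nonneg
    intro p hp
    exact inv_nonneg.mpr (hzb1 p hp).le
  calc ∏ q ∈ Q, mgf (Xv q) μ (2*α)
      ≤ ∏ q ∈ Q, (Real.exp (wb q.1) * zb q.1) := hprodQ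
    _ = Real.exp (∑ p ∈ P, wb p) * (zetaSmooth β y ^ (α^2/δ^2)) := by
        rw [hQP, hsplit, hzprod]
    _ ≤ Real.exp (100000*(1 + |α| ^ ((11:ℝ)/3))) * zetaSmooth β y ^ (α^2/δ^2) :=
        mul_le_mul_of_nonneg_right (Real.exp_le_exp.mpr hwsum) hzeta0


end
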